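/- arXiv:1512.02457 — 10 statements merged into one kernel-verified Lean document; each statement's English description precedes it below -/
import Mathlib

section
/- Every element of ℒ is either the empty set or the union of a finite family of pairwise disjoint atoms. -/
namespace Box

variable {N M : ℕ}

/-- The atom `[aα, bβ] = {(x, y) ∈ Γ : x_a = α ∧ y_b = β}`. -/
def atom {U : Fin N → Type} {V : Fin M → Type} (a : Fin N) (α : U a)
    (b : Fin M) (β : V b) : Set ((∀ i, U i) × (∀ j, V j)) :=
  {p | p.1 a = α ∧ p.2 b = β}

/-- `ℒ`: the smallest family of subsets of `Γ` containing the empty set and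
every atom, closed under complementation and under unions of finite families
of pairwise disjoint members. -/
inductive Logic (U : Fin N → Type) (V : Fin M → Type) :
    Set ((∀ i, U i) × (∀ j, V j)) → Prop
  | empty : Logic U V ∅
  | atom (a : Fin N) (α : U a) (b : Fin M) (β : V b) :
      Logic U V (Box.atom a α b β)
  | compl (s : Set ((∀ i, U i) × (∀ j, V j))) (hs : Logic U V s) :
      Logic U V sᶜ
  | iUnion (n : ℕ) (f : Fin n → Set ((∀ i, U i) × (∀ j, V j)))
      (hf : ∀ i, Logic U V (f i))
      (hd : ∀ i j, i ≠ j → Disjoint (f i) (f j)) :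
      Logic U V (⋃ i, f i)

/-- The localized element `[a∈P, 𝟙] = {(x, y) ∈ Γ : x_a ∈ P}`. -/
def locL (U : Fin N → Type) (V : Fin M → Type) (a : Fin N) (P : Set (U a)) :
    Set ((∀ i, U i) × (∀ j, V j)) := {p | p.1 a ∈ P}

/-- The localized element `[𝟙, b∈Q] = {(x, y) ∈ Γ : y_b ∈ Q}`. -/
def locR (U : Fin N → Type) (V : Fin M → Type) (b : Fin M) (Q : Set (V b)) :
    Set ((∀ i, U i) × (∀ j, V j)) := {p | p.2 b ∈ Q}

/-- A state on `ℒ`: a map `ρ : ℒ → [0,1]` with `ρ(Γ) = 1` which is additive on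
finite families of pairwise disjoint members of `ℒ` whose union lies in `ℒ`. -/
structure State (U : Fin N → Type) (V : Fin M → Type) where
  val : Set ((∀ i, U i) × (∀ j, V j)) → ℝ
  nonneg : ∀ s, Logic U V s → 0 ≤ val s
  le_one : ∀ s, Logic U V s → val s ≤ 1
  normalized : val Set.univ = 1
  additive : ∀ (n : ℕ) (f : Fin n → Set ((∀ i, U i) × (∀ j, V j))),
    (∀ i, Logic U V (f i)) → (∀ i j, i ≠ j → Disjoint (f i) (f j)) →
    Logic U V (⋃ i, f i) → val (⋃ i, f i) = ∑ i, val (f i)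

/-- A PR-state: nonnegative, normalized for every pair of inputs, and
satisfying the two non-signalling conditions. `val a b α β = P(αβ | ab)`. -/
structure PRState (U : Fin N → Type) (V : Fin M → Type)
    [∀ a, Fintype (U a)] [∀ b, Fintype (V b)] where
  val : ∀ (a : Fin N) (b : Fin M), U a → V b → ℝ
  nonneg : ∀ a b α β, 0 ≤ val a b α β
  normalized : ∀ a b, ∑ α, ∑ β, val a b α β = 1
  nonsig_left : ∀ (a c : Fin N) (b : Fin M) (β : V b),
    ∑ α, val a b α β = ∑ α, val c b α β
  nonsig_right : ∀ (a : Fin N) (b c : Fin M) (α : U a),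
    ∑ β, val a b α β = ∑ β, val a c α β

/-- `p, q ∈ ℒ` are compatible when there are pairwise disjoint
`p₁, q₁, r ∈ ℒ` with `p = p₁ ∪ r` and `q = q₁ ∪ r`. -/
def Compatible (U : Fin N → Type) (V : Fin M → Type)
    (p q : Set ((∀ i, U i) × (∀ j, V j))) : Prop :=
  ∃ p₁ q₁ r, Logic U V p₁ ∧ Logic U V q₁ ∧ Logic U V r ∧
    Disjoint p₁ q₁ ∧ Disjoint p₁ r ∧ Disjoint q₁ r ∧
    p = p₁ ∪ r ∧ q = q₁ ∪ r

end Box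

section Aux

open Set

variable {N M : ℕ} {U : Fin N → Type} {V : Fin M → Type}

/-- Normal form "C": sliced over the outcomes of a single right input `b`,
each slice being a left cylinder. -/
def Cc (U : Fin N → Type) (V : Fin M → Type)
    (s : Set ((∀ i, U i) × (∀ j, V j))) : Prop :=
  ∃ b : Fin M, ∀ β : V b, ∃ (a : Fin N) (P : Set (U a)),
    s ∩ {p | p.2 b = β} = {p | p.1 a ∈ P ∧ p.2 b = β}

lemma exists_fun₁ {ι : Type} (T : ι → Type) [∀ i, Nonempty (T i)]
    (i₀ : ι) (t₀ : T i₀) : ∃ x : ∀ i, T i, x i₀ = t₀ := by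
  classical
  exact ⟨Function.update (fun i => Classical.arbitrary _) i₀ t₀,
    Function.update_self _ _ _⟩

lemma exists_fun₂ {ι : Type} [DecidableEq ι] (T : ι → Type) [∀ i, Nonempty (T i)]
    {i₁ i₂ : ι} (h : i₁ ≠ i₂) (t₁ : T i₁) (t₂ : T i₂) :
    ∃ x : ∀ i, T i, x i₁ = t₁ ∧ x i₂ = t₂ := by
  refine ⟨Function.update (Function.update (fun i => Classical.arbitrary _) i₁ t₁) i₂ t₂,
    ?_, Function.update_self _ _ _⟩
  rw [Function.update_of_ne h, Function.update_self]

lemma exists_pt21 [∀ i, Nonempty (U i)] [∀ j, Nonempty (V j)]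
    {a₁ a₂ : Fin N} (h : a₁ ≠ a₂) (α₁ : U a₁) (α₂ : U a₂)
    (b : Fin M) (β : V b) :
    ∃ p : (∀ i, U i) × (∀ j, V j), p.1 a₁ = α₁ ∧ p.1 a₂ = α₂ ∧ p.2 b = β := by
  obtain ⟨x, hx1, hx2⟩ := exists_fun₂ U h α₁ α₂
  obtain ⟨y, hy⟩ := exists_fun₁ V b β
  exact ⟨(x, y), hx1, hx2, hy⟩

lemma exists_pt22 [∀ i, Nonempty (U i)] [∀ j, Nonempty (V j)]
    {a₁ a₂ : Fin N} (h : a₁ ≠ a₂) (α₁ : U a₁) (α₂ : U a₂)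
    {b₁ b₂ : Fin M} (hb : b₁ ≠ b₂) (β₁ : V b₁) (β₂ : V b₂) :
    ∃ p : (∀ i, U i) × (∀ j, V j),
      p.1 a₁ = α₁ ∧ p.1 a₂ = α₂ ∧ p.2 b₁ = β₁ ∧ p.2 b₂ = β₂ := by
  obtain ⟨x, hx1, hx2⟩ := exists_fun₂ U h α₁ α₂
  obtain ⟨y, hy1, hy2⟩ := exists_fun₂ V hb β₁ β₂
  exact ⟨(x, y), hx1, hx2, hy1, hy2⟩

lemma swap_preimage_preimage (s : Set ((∀ i, U i) × (∀ j, V j))) :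
    Prod.swap ⁻¹' (Prod.swap ⁻¹' s) = s := by
  ext p; simp

lemma cc_empty (hN : 0 < N) (hM : 0 < M) :
    Cc U V (∅ : Set ((∀ i, U i) × (∀ j, V j))) := by
  refine ⟨⟨0, hM⟩, fun β => ⟨⟨0, hN⟩, ∅, ?_⟩⟩
  ext p; simp

lemma cc_atom (a : Fin N) (α : U a) (b : Fin M) (β : V b) :
    Cc U V (Box.atom a α b β) := by
  classical
  refine ⟨b, fun β' => ?_⟩
  by_cases h : β' = β
  · subst h
    refine ⟨a, {α}, ?_⟩
    ext p
    simp only [Box.atom, Set.mem_inter_iff, Set.mem_setOf_eq, Set.mem_singleton_iff]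
    tauto
  · refine ⟨a, ∅, ?_⟩
    ext p
    simp only [Box.atom, Set.mem_inter_iff, Set.mem_setOf_eq,
      Set.mem_empty_iff_false, false_and, iff_false, not_and]
    rintro ⟨h1, h2⟩ h3
    exact h (h3.symm.trans h2)

lemma cc_compl {s : Set ((∀ i, U i) × (∀ j, V j))} (hs : Cc U V s) :
    Cc U V sᶜ := by
  obtain ⟨b, h⟩ := hs
  refine ⟨b, fun β => ?_⟩
  obtain ⟨a, P, hP⟩ := h β
  refine ⟨a, Pᶜ, ?_⟩
  have hP' := Set.ext_iff.mp hP
  ext p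
  have := hP' p
  simp only [Set.mem_inter_iff, Set.mem_compl_iff, Set.mem_setOf_eq] at this ⊢
  tauto

lemma cc_union_sameb [∀ i, Nonempty (U i)] [∀ j, Nonempty (V j)]
    {s t : Set ((∀ i, U i) × (∀ j, V j))} (b : Fin M)
    (hs : ∀ β : V b, ∃ (a : Fin N) (P : Set (U a)),
      s ∩ {p | p.2 b = β} = {p | p.1 a ∈ P ∧ p.2 b = β})
    (ht : ∀ β : V b, ∃ (a : Fin N) (P : Set (U a)),
      t ∩ {p | p.2 b = β} = {p | p.1 a ∈ P ∧ p.2 b = β})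
    (hd : Disjoint s t) :
    ∀ β : V b, ∃ (a : Fin N) (P : Set (U a)),
      (s ∪ t) ∩ {p | p.2 b = β} = {p | p.1 a ∈ P ∧ p.2 b = β} := by
  intro β
  obtain ⟨a, P, hP⟩ := hs β
  obtain ⟨a', P', hP'⟩ := ht β
  have hPm := Set.ext_iff.mp hP
  have hPm' := Set.ext_iff.mp hP'
  by_cases hPe : P = ∅
  · refine ⟨a', P', ?_⟩
    subst hPe
    ext p
    have h1 := hPm p
    have h2 := hPm' p
    simp only [Set.mem_inter_iff, Set.mem_union, Set.mem_setOf_eq,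
      Set.mem_empty_iff_false, false_and] at h1 h2 ⊢
    tauto
  · by_cases hPe' : P' = ∅
    · refine ⟨a, P, ?_⟩
      subst hPe'
      ext p
      have h1 := hPm p
      have h2 := hPm' p
      simp only [Set.mem_inter_iff, Set.mem_union, Set.mem_setOf_eq,
        Set.mem_empty_iff_false, false_and] at h1 h2 ⊢
      tauto
    · obtain ⟨α, hα⟩ := Set.nonempty_iff_ne_empty.mpr hPe
      obtain ⟨α', hα'⟩ := Set.nonempty_iff_ne_empty.mpr hPe'
      by_cases haa : a = a'
      · subst haa
        refine ⟨a, P ∪ P', ?_⟩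
        ext p
        have h1 := hPm p
        have h2 := hPm' p
        simp only [Set.mem_inter_iff, Set.mem_union, Set.mem_setOf_eq] at h1 h2 ⊢
        tauto
      · exfalso
        obtain ⟨p, h1, h2, h3⟩ := exists_pt21 (U := U) (V := V) haa α α' b β
        have ps : p ∈ s := ((hPm p).mpr ⟨by rw [h1]; exact hα, h3⟩).1
        have pt : p ∈ t := ((hPm' p).mpr ⟨by rw [h2]; exact hα', h3⟩).1
        exact Set.disjoint_left.mp hd ps pt

lemma cc_to_cs {s : Set ((∀ i, U i) × (∀ j, V j))}
    (b : Fin M) (a : V b → Fin N) (P : ∀ β, Set (U (a β)))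
    (hP : ∀ β, s ∩ {p | p.2 b = β} = {p | p.1 (a β) ∈ P β ∧ p.2 b = β})
    (a0 : Fin N) (hcom : ∀ β, (P β).Nonempty → a β = a0) :
    ∀ α : U a0, ∃ (b' : Fin M) (Q : Set (V b')),
      (Prod.swap ⁻¹' s) ∩ {q | q.2 a0 = α} = {q | q.1 b' ∈ Q ∧ q.2 a0 = α} := by
  intro α
  refine ⟨b, {β : V b | {p : (∀ i, U i) × (∀ j, V j) | p.1 a0 = α ∧ p.2 b = β} ⊆ s}, ?_⟩
  ext q
  simp only [Set.mem_inter_iff, Set.mem_preimage, Set.mem_setOf_eq]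
  constructor
  · rintro ⟨hqs, hqa⟩
    refine ⟨?_, hqa⟩
    have hq2 : (Prod.swap q) ∈ s ∩ {p | p.2 b = q.1 b} := ⟨hqs, rfl⟩
    rw [hP (q.1 b)] at hq2
    obtain ⟨hmem, -⟩ := hq2
    have ha : a (q.1 b) = a0 := hcom _ ⟨_, hmem⟩
    intro r hr
    have hrs : r ∈ s ∩ {p | p.2 b = q.1 b} := by
      rw [hP (q.1 b)]
      refine ⟨?_, hr.2⟩
      have hx : r.1 (a (q.1 b)) = q.2 (a (q.1 b)) := by
        rw [ha]; rw [hr.1, ← hqa]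
      rw [hx]; exact hmem
    exact hrs.1
  · rintro ⟨hβ, hqa⟩
    exact ⟨hβ ⟨hqa, rfl⟩, hqa⟩

lemma cc_nonempty_slice {s : Set ((∀ i, U i) × (∀ j, V j))}
    (b : Fin M) (a : V b → Fin N) (P : ∀ β, Set (U (a β)))
    (hP : ∀ β, s ∩ {p | p.2 b = β} = {p | p.1 (a β) ∈ P β ∧ p.2 b = β})
    (hne : s.Nonempty) : ∃ β, (P β).Nonempty := by
  obtain ⟨p, hp⟩ := hne
  have : p ∈ s ∩ {q | q.2 b = p.2 b} := ⟨hp, rfl⟩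
  rw [hP (p.2 b)] at this
  exact ⟨p.2 b, _, this.1⟩

lemma cc_cross [∀ i, Nonempty (U i)] [∀ j, Nonempty (V j)]
    {s t : Set ((∀ i, U i) × (∀ j, V j))} (hd : Disjoint s t)
    {b b' : Fin M} (hbb : b ≠ b')
    (a : V b → Fin N) (P : ∀ β, Set (U (a β)))
    (hP : ∀ β, s ∩ {p | p.2 b = β} = {p | p.1 (a β) ∈ P β ∧ p.2 b = β})
    (a' : V b' → Fin N) (P' : ∀ β', Set (U (a' β')))
    (hP' : ∀ β', t ∩ {p | p.2 b' = β'} = {p | p.1 (a' β') ∈ P' β' ∧ p.2 b' = β'}) :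
    ∀ β β', (P β).Nonempty → (P' β').Nonempty → a β = a' β' := by
  rintro β β' ⟨α, hα⟩ ⟨α', hα'⟩
  by_contra hne
  obtain ⟨p, h1, h2, h3, h4⟩ := exists_pt22 (U := U) (V := V) hne α α' hbb β β'
  have ps : p ∈ s := by
    have : p ∈ {q : (∀ i, U i) × (∀ j, V j) | q.1 (a β) ∈ P β ∧ q.2 b = β} :=
      ⟨by rw [h1]; exact hα, h3⟩
    rw [← hP β] at this
    exact this.1
  have pt : p ∈ t := by
    have : p ∈ {q : (∀ i, U i) × (∀ j, V j) | q.1 (a' β') ∈ P' β' ∧ q.2 b' = β'} :=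
      ⟨by rw [h2]; exact hα', h4⟩
    rw [← hP' β'] at this
    exact this.1
  exact Set.disjoint_left.mp hd ps pt

/-- Merging two disjoint sets both in normal form `Cc`. -/
lemma cc_cc_union [∀ i, Nonempty (U i)] [∀ j, Nonempty (V j)]
    {s t : Set ((∀ i, U i) × (∀ j, V j))}
    (hs : Cc U V s) (ht : Cc U V t) (hd : Disjoint s t)
    (hsne : s.Nonempty) (htne : t.Nonempty) :
    Cc U V (s ∪ t) ∨ Cc V U (Prod.swap ⁻¹' (s ∪ t)) := by
  classical
  obtain ⟨b, hsb⟩ := hs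
  obtain ⟨b', htb⟩ := ht
  by_cases hbb : b = b'
  · subst hbb
    exact Or.inl ⟨b, cc_union_sameb b hsb htb hd⟩
  · choose a P hP using hsb
    choose a' P' hP' using htb
    obtain ⟨β₁, hβ₁⟩ := cc_nonempty_slice b a P hP hsne
    obtain ⟨β'₁, hβ'₁⟩ := cc_nonempty_slice b' a' P' hP' htne
    have crossST := cc_cross hd hbb a P hP a' P' hP'
    have crossTS := cc_cross hd.symm (Ne.symm hbb) a' P' hP' a P hP
    set a0 := a' β'₁ with ha0
    have hcomS : ∀ β, (P β).Nonempty → a β = a0 := fun β h => crossST β β'₁ h hβ'₁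
    have hcomT : ∀ β', (P' β').Nonempty → a' β' = a0 := fun β' h =>
      (crossTS β' β₁ h hβ₁).trans (crossST β₁ β'₁ hβ₁ hβ'₁)
    have hs' := cc_to_cs b a P hP a0 hcomS
    have ht' := cc_to_cs b' a' P' hP' a0 hcomT
    refine Or.inr ⟨a0, ?_⟩
    rw [Set.preimage_union]
    exact cc_union_sameb (U := V) (V := U) a0 hs' ht' (hd.preimage _)

/-- Merging a `Cc` set with a mirrored-normal-form set. -/
lemma cc_mix_union [∀ i, Nonempty (U i)] [∀ j, Nonempty (V j)]
    {s t : Set ((∀ i, U i) × (∀ j, V j))}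
    (hs : Cc U V s) (ht : Cc V U (Prod.swap ⁻¹' t)) (hd : Disjoint s t) :
    Cc U V (s ∪ t) ∨ Cc V U (Prod.swap ⁻¹' (s ∪ t)) := by
  classical
  obtain ⟨b, hsb⟩ := hs
  choose a P hP using hsb
  obtain ⟨a', htb⟩ := ht
  choose b' Q hQ using htb
  by_cases hc : ∀ β, (P β).Nonempty → a β = a'
  · have hs' := cc_to_cs b a P hP a' hc
    refine Or.inr ⟨a', ?_⟩
    rw [Set.preimage_union]
    exact cc_union_sameb (U := V) (V := U) a' hs' (fun α => ⟨b' α, Q α, hQ α⟩) (hd.preimage _)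
  · push_neg at hc
    obtain ⟨β₀, hβ₀ne, hβ₀a⟩ := hc
    have hc' : ∀ α, (Q α).Nonempty → b' α = b := by
      rintro α ⟨β₁, hβ₁⟩
      by_contra hbb
      obtain ⟨α₀, hα₀⟩ := hβ₀ne
      obtain ⟨p, h1, h2, h3, h4⟩ :=
        exists_pt22 (U := U) (V := V) hβ₀a α₀ α (Ne.symm hbb) β₀ β₁
      have ps : p ∈ s := by
        have : p ∈ {q : (∀ i, U i) × (∀ j, V j) | q.1 (a β₀) ∈ P β₀ ∧ q.2 b = β₀} :=
          ⟨by rw [h1]; exact hα₀, h3⟩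
        rw [← hP β₀] at this
        exact this.1
      have pt : p ∈ t := by
        have hps : Prod.swap p ∈ (Prod.swap ⁻¹' t) ∩ {q | q.2 a' = α} := by
          rw [hQ α]
          exact ⟨by show p.2 (b' α) ∈ Q α; rw [h4]; exact hβ₁,
            by show p.1 a' = α; exact h2⟩
        have := hps.1
        rwa [Set.mem_preimage, Prod.swap_swap] at this
      exact Set.disjoint_left.mp hd ps pt
    have ht' := cc_to_cs (U := V) (V := U) a' b' Q hQ b hc'
    rw [swap_preimage_preimage] at ht'
    refine Or.inl ⟨b, ?_⟩
    exact cc_union_sameb b (fun β => ⟨a β, P β, hP β⟩) ht' hd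

/-- Binary merge lemma. -/
lemma cc_binary [∀ i, Nonempty (U i)] [∀ j, Nonempty (V j)]
    {s t : Set ((∀ i, U i) × (∀ j, V j))}
    (hs : Cc U V s ∨ Cc V U (Prod.swap ⁻¹' s))
    (ht : Cc U V t ∨ Cc V U (Prod.swap ⁻¹' t))
    (hd : Disjoint s t) :
    Cc U V (s ∪ t) ∨ Cc V U (Prod.swap ⁻¹' (s ∪ t)) := by
  classical
  by_cases hse : s = ∅
  · subst hse; rw [Set.empty_union]; exact ht
  by_cases hte : t = ∅
  · subst hte; rw [Set.union_empty]; exact hs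
  have hsne : s.Nonempty := Set.nonempty_iff_ne_empty.mpr hse
  have htne : t.Nonempty := Set.nonempty_iff_ne_empty.mpr hte
  rcases hs with hs | hs <;> rcases ht with ht | ht
  · exact cc_cc_union hs ht hd hsne htne
  · exact cc_mix_union hs ht hd
  · rw [Set.union_comm]
    exact cc_mix_union ht hs hd.symm
  · have hsne' : (Prod.swap ⁻¹' s).Nonempty := by
      obtain ⟨p, hp⟩ := hsne
      exact ⟨Prod.swap p, by rwa [Set.mem_preimage, Prod.swap_swap]⟩
    have htne' : (Prod.swap ⁻¹' t).Nonempty := by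
      obtain ⟨p, hp⟩ := htne
      exact ⟨Prod.swap p, by rwa [Set.mem_preimage, Prod.swap_swap]⟩
    have := cc_cc_union (U := V) (V := U) hs ht (hd.preimage _) hsne' htne'
    rw [← Set.preimage_union, swap_preimage_preimage] at this
    rcases this with h | h
    · exact Or.inr (by rwa [Set.preimage_union])
    · exact Or.inl h

lemma cc_iUnion [∀ i, Nonempty (U i)] [∀ j, Nonempty (V j)]
    (hN : 0 < N) (hM : 0 < M) :
    ∀ (n : ℕ) (f : Fin n → Set ((∀ i, U i) × (∀ j, V j))),
      (∀ i, Cc U V (f i) ∨ Cc V U (Prod.swap ⁻¹' (f i))) →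
      (∀ i j, i ≠ j → Disjoint (f i) (f j)) →
      (Cc U V (⋃ i, f i) ∨ Cc V U (Prod.swap ⁻¹' ⋃ i, f i)) := by
  intro n
  induction n with
  | zero =>
    intro f _ _
    rw [Set.iUnion_of_empty]
    exact Or.inl (cc_empty hN hM)
  | succ n IH =>
    intro f hf hd
    have hsplit : (⋃ i, f i) = (⋃ i : Fin n, f i.castSucc) ∪ f (Fin.last n) := by
      ext p
      simp only [Set.mem_iUnion, Set.mem_union]
      constructor
      · rintro ⟨i, hi⟩
        induction i using Fin.lastCases with
        | last => exact Or.inr hi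
        | cast j => exact Or.inl ⟨j, hi⟩
      · rintro (⟨j, hj⟩ | h)
        · exact ⟨j.castSucc, hj⟩
        · exact ⟨Fin.last n, h⟩
    rw [hsplit]
    refine cc_binary ?_ (hf _) ?_
    · exact IH (fun i => f i.castSucc) (fun i => hf _)
        (fun i j hij => hd _ _ (fun h => hij (Fin.castSucc_injective n h)))
    · exact Set.disjoint_iUnion_left.mpr
        (fun i => hd _ _ (Fin.castSucc_lt_last i).ne)

lemma cc_extract [∀ i, Fintype (U i)] [∀ j, Fintype (V j)]
    {s : Set ((∀ i, U i) × (∀ j, V j))} (hs : Cc U V s) :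
    ∃ (n : ℕ) (f : Fin n → Set ((∀ i, U i) × (∀ j, V j))),
      (∀ i, ∃ (a : Fin N) (α : U a) (b : Fin M) (β : V b),
        f i = Box.atom a α b β) ∧
      (∀ i j, i ≠ j → Disjoint (f i) (f j)) ∧
      s = ⋃ i, f i := by
  classical
  obtain ⟨b, h⟩ := hs
  choose a P hP using h
  let I := Σ β : V b, ↥(P β)
  letI : ∀ β, Fintype ↥(P β) := fun β => (Set.toFinite _).fintype
  letI : Fintype I := Sigma.instFintype
  let g : I → Set ((∀ i, U i) × (∀ j, V j)) :=
    fun x => Box.atom (a x.1) (x.2 : U (a x.1)) b x.1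
  have hgdisj : ∀ x y : I, x ≠ y → Disjoint (g x) (g y) := by
    rintro ⟨β, α⟩ ⟨β', α'⟩ hxy
    rw [Set.disjoint_left]
    rintro p ⟨h1, h2⟩ ⟨h3, h4⟩
    by_cases hβ : β = β'
    · subst hβ
      have hαα : α ≠ α' := fun h => hxy (by rw [h])
      exact Subtype.coe_injective.ne hαα (h1.symm.trans h3)
    · exact hβ (h2.symm.trans h4)
  let e := Fintype.equivFin I
  refine ⟨Fintype.card I, fun i => g (e.symm i),
    fun i => ⟨a (e.symm i).1, ((e.symm i).2 : U (a (e.symm i).1)), b, (e.symm i).1, rfl⟩,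
    fun i j hij => hgdisj _ _ (fun hh => hij (e.symm.injective hh)), ?_⟩
  rw [e.symm.surjective.iUnion_comp]
  ext p
  simp only [Set.mem_iUnion]
  constructor
  · intro hp
    have hmem : p ∈ s ∩ {q | q.2 b = p.2 b} := ⟨hp, rfl⟩
    rw [hP (p.2 b)] at hmem
    exact ⟨⟨p.2 b, ⟨p.1 (a (p.2 b)), hmem.1⟩⟩, rfl, rfl⟩
  · rintro ⟨⟨β, α⟩, hp1, hp2⟩
    have hmem : p ∈ s ∩ {q | q.2 b = β} := by
      rw [hP β]
      exact ⟨by rw [hp1]; exact α.2, hp2⟩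
    exact hmem.1

lemma cs_extract [∀ i, Fintype (U i)] [∀ j, Fintype (V j)]
    {s : Set ((∀ i, U i) × (∀ j, V j))} (hs : Cc V U (Prod.swap ⁻¹' s)) :
    ∃ (n : ℕ) (f : Fin n → Set ((∀ i, U i) × (∀ j, V j))),
      (∀ i, ∃ (a : Fin N) (α : U a) (b : Fin M) (β : V b),
        f i = Box.atom a α b β) ∧
      (∀ i j, i ≠ j → Disjoint (f i) (f j)) ∧
      s = ⋃ i, f i := by
  obtain ⟨n, f, hatom, hdisj, hu⟩ := cc_extract (U := V) (V := U) hs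
  refine ⟨n, fun i => Prod.swap ⁻¹' f i, ?_,
    fun i j hij => (hdisj i j hij).preimage _, ?_⟩
  · intro i
    obtain ⟨b, β, a, α, hf⟩ := hatom i
    refine ⟨a, α, b, β, ?_⟩
    show Prod.swap ⁻¹' f i = Box.atom a α b β
    rw [hf]
    ext p
    simp only [Set.mem_preimage, Box.atom, Set.mem_setOf_eq, Prod.fst_swap,
      Prod.snd_swap]
    exact and_comm
  · have h2 : Prod.swap ⁻¹' (Prod.swap ⁻¹' s) = s := swap_preimage_preimage s
    rw [← h2, hu, Set.preimage_iUnion]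

end Aux

theorem statement1 {N M : ℕ} (hN : 0 < N) (hM : 0 < M)
    (U : Fin N → Type) (V : Fin M → Type)
    [∀ a, Fintype (U a)] [∀ b, Fintype (V b)]
    (hU : ∀ a, 2 ≤ Fintype.card (U a)) (hV : ∀ b, 2 ≤ Fintype.card (V b))
    (s : Set ((∀ i, U i) × (∀ j, V j))) (hs : Box.Logic U V s) :
    s = ∅ ∨ ∃ (n : ℕ) (f : Fin n → Set ((∀ i, U i) × (∀ j, V j))),
      (∀ i, ∃ (a : Fin N) (α : U a) (b : Fin M) (β : V b),
        f i = Box.atom a α b β) ∧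
      (∀ i j, i ≠ j → Disjoint (f i) (f j)) ∧
      s = ⋃ i, f i := by
  haveI hUne : ∀ i, Nonempty (U i) := fun i =>
    Fintype.card_pos_iff.mp (lt_of_lt_of_le (by norm_num) (hU i))
  haveI hVne : ∀ j, Nonempty (V j) := fun j =>
    Fintype.card_pos_iff.mp (lt_of_lt_of_le (by norm_num) (hV j))
  have key : Cc U V s ∨ Cc V U (Prod.swap ⁻¹' s) := by
    induction hs with
    | empty => exact Or.inl (cc_empty hN hM)
    | atom a α b β => exact Or.inl (cc_atom a α b β)
    | compl t ht ih =>
      rcases ih with h | h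
      · exact Or.inl (cc_compl h)
      · exact Or.inr (by rw [Set.preimage_compl]; exact cc_compl h)
    | iUnion n f hf hd ih => exact cc_iUnion hN hM n f ih hd
  rcases key with h | h
  · exact Or.inr (cc_extract h)
  · exact Or.inr (cs_extract h)
end

section
/- The elements of 𝒜 are exactly the atoms of the logic ℒ: every nonempty element of ℒ contains some atom [aα,bβ], and if r ∈ ℒ satisfies r ⊆ [aα,bβ] for some atom [aα,bβ], then r = ∅ or r = [aα,bβ]. -/
namespace S2Aux

open Function Set

variable {N M : ℕ} {U : Fin N → Type} {V : Fin M → Type}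

/-- A subset of `∏ V` of the form `{y | y b ∈ Q}`. -/
def LocR (V : Fin M → Type) (R : Set (∀ j, V j)) : Prop :=
  ∃ (b : Fin M) (Q : Set (V b)), R = {y | y b ∈ Q}

/-- A subset of `∏ U` of the form `{x | x a ∈ P}`. -/
def LocL (U : Fin N → Type) (R : Set (∀ i, U i)) : Prop :=
  ∃ (a : Fin N) (P : Set (U a)), R = {x | x a ∈ P}

/-- A left-fibered set. -/
def LForm (U : Fin N → Type) (V : Fin M → Type)
    (s : Set ((∀ i, U i) × (∀ j, V j))) : Prop :=
  ∃ (a : Fin N) (R : U a → Set (∀ j, V j)),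
    (∀ α, LocR V (R α)) ∧ s = {p | p.2 ∈ R (p.1 a)}

/-- A right-fibered set. -/
def RForm (U : Fin N → Type) (V : Fin M → Type)
    (s : Set ((∀ i, U i) × (∀ j, V j))) : Prop :=
  ∃ (b : Fin M) (S : V b → Set (∀ i, U i)),
    (∀ β, LocL U (S β)) ∧ s = {p | p.1 ∈ S (p.2 b)}

def Good (U : Fin N → Type) (V : Fin M → Type)
    (s : Set ((∀ i, U i) × (∀ j, V j))) : Prop :=
  LForm U V s ∨ RForm U V s

lemma exists_pi (hU : ∀ i, Nonempty (U i)) (a : Fin N) (α : U a) :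
    ∃ x : ∀ i, U i, x a = α := by
  have x0 : ∀ i, U i := fun i => (hU i).some
  exact ⟨Function.update x0 a α, by simp⟩

lemma exists_pi2 (hU : ∀ i, Nonempty (U i)) {a c : Fin N} (h : a ≠ c)
    (α : U a) (γ : U c) : ∃ x : ∀ i, U i, x a = α ∧ x c = γ := by
  have x0 : ∀ i, U i := fun i => (hU i).some
  refine ⟨Function.update (Function.update x0 a α) c γ, ?_, by simp⟩
  rw [Function.update_of_ne h, Function.update_self]

lemma locR_union (hV : ∀ j, Nonempty (V j)) {R R' : Set (∀ j, V j)}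
    (h1 : LocR V R) (h2 : LocR V R')
    (hd : ∀ y, y ∈ R → y ∉ R') : LocR V (R ∪ R') := by
  obtain ⟨b, Q, rfl⟩ := h1
  obtain ⟨b', Q', rfl⟩ := h2
  by_cases hb : b = b'
  · subst hb
    exact ⟨b, Q ∪ Q', by ext y; simp⟩
  · rcases Set.eq_empty_or_nonempty Q with hQ | ⟨β, hβ⟩
    · exact ⟨b', Q', by rw [hQ]; ext y; simp⟩
    rcases Set.eq_empty_or_nonempty Q' with hQ' | ⟨β', hβ'⟩
    · exact ⟨b, Q, by rw [hQ']; ext y; simp⟩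
    obtain ⟨y, hy1, hy2⟩ := exists_pi2 hV hb β β'
    exact absurd (by simpa [hy2] using hβ' : y ∈ {y | y b' ∈ Q'})
      (hd y (by simpa [hy1] using hβ))

lemma lform_union (hU : ∀ i, Nonempty (U i)) (hV : ∀ j, Nonempty (V j))
    {s t : Set ((∀ i, U i) × (∀ j, V j))}
    (hs : LForm U V s) (ht : LForm U V t) (hd : Disjoint s t) :
    Good U V (s ∪ t) := by
  classical
  obtain ⟨a, R, hR, rfl⟩ := hs
  obtain ⟨a', R', hR', rfl⟩ := ht
  by_cases haa : a = a'
  · subst haa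
    have hdis : ∀ α (y : ∀ j, V j), y ∈ R α → y ∉ R' α := by
      intro α y hy hy'
      obtain ⟨x, hx⟩ := exists_pi hU a α
      exact Set.disjoint_left.mp hd
        (show (x, y) ∈ _ by simp only [Set.mem_setOf_eq, hx]; exact hy)
        (show (x, y) ∈ _ by simp only [Set.mem_setOf_eq, hx]; exact hy')
    refine Or.inl ⟨a, fun α => R α ∪ R' α, fun α => locR_union hV (hR α) (hR' α) (hdis α), ?_⟩
    ext p; simp [Set.mem_setOf_eq]
  · have hdis : ∀ α α' (y : ∀ j, V j), y ∈ R α → y ∉ R' α' := by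
      intro α α' y hy hy'
      obtain ⟨x, hx1, hx2⟩ := exists_pi2 hU haa α α'
      exact Set.disjoint_left.mp hd
        (show (x, y) ∈ _ by simp only [Set.mem_setOf_eq, hx1]; exact hy)
        (show (x, y) ∈ _ by simp only [Set.mem_setOf_eq, hx2]; exact hy')
    by_cases h1 : ∀ α, R α = ∅
    · refine Or.inl ⟨a', R', hR', ?_⟩
      ext p; simp [h1]
    by_cases h2 : ∀ α', R' α' = ∅
    · refine Or.inl ⟨a, R, hR, ?_⟩
      ext p; simp [h2]
    push_neg at h1 h2
    obtain ⟨α0, hα0⟩ := h1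
    obtain ⟨α0', hα0'⟩ := h2
    obtain ⟨b0, Q0, hQ0⟩ := hR α0
    have hQ0ne : Q0.Nonempty := by
      obtain ⟨y, hy⟩ := hα0
      rw [hQ0] at hy; exact ⟨y b0, hy⟩
    obtain ⟨β0, hβ0⟩ := hQ0ne
    have claimA : ∀ α', ∃ Q' : Set (V b0), R' α' = {y | y b0 ∈ Q'} := by
      intro α'
      rcases Set.eq_empty_or_nonempty (R' α') with he | ⟨y1, hy1⟩
      · exact ⟨∅, by rw [he]; ext y; simp⟩
      obtain ⟨b1, Q1, hQ1⟩ := hR' α'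
      by_cases hb : b1 = b0
      · subst hb; exact ⟨Q1, hQ1⟩
      · exfalso
        have hβ1 : y1 b1 ∈ Q1 := by rw [hQ1] at hy1; exact hy1
        obtain ⟨y, hyb0, hyb1⟩ := exists_pi2 hV (Ne.symm hb) β0 (y1 b1)
        exact hdis α0 α' y (by rw [hQ0]; simpa [hyb0] using hβ0)
          (by rw [hQ1]; simpa [hyb1] using hβ1)
    obtain ⟨Q'0, hQ'0⟩ := claimA α0'
    have hQ'0ne : Q'0.Nonempty := by
      obtain ⟨y, hy⟩ := hα0'
      rw [hQ'0] at hy; exact ⟨y b0, hy⟩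
    obtain ⟨β'0, hβ'0⟩ := hQ'0ne
    have claimB : ∀ α, ∃ Q : Set (V b0), R α = {y | y b0 ∈ Q} := by
      intro α
      rcases Set.eq_empty_or_nonempty (R α) with he | ⟨y1, hy1⟩
      · exact ⟨∅, by rw [he]; ext y; simp⟩
      obtain ⟨b1, Q1, hQ1⟩ := hR α
      by_cases hb : b1 = b0
      · subst hb; exact ⟨Q1, hQ1⟩
      · exfalso
        have hβ1 : y1 b1 ∈ Q1 := by rw [hQ1] at hy1; exact hy1
        obtain ⟨y, hyb0, hyb1⟩ := exists_pi2 hV (Ne.symm hb) β'0 (y1 b1)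
        exact hdis α α0' y (by rw [hQ1]; simpa [hyb1] using hβ1)
          (by rw [hQ'0]; simpa [hyb0] using hβ'0)
    choose Q hQ using claimB
    choose Q' hQ' using claimA
    have hQQ : ∀ α α' (β : V b0), β ∈ Q α → β ∉ Q' α' := by
      intro α α' β h1' h2'
      obtain ⟨y, hy⟩ := exists_pi hV b0 β
      exact hdis α α' y (by rw [hQ α]; simpa [hy] using h1')
        (by rw [hQ' α']; simpa [hy] using h2')
    refine Or.inr ⟨b0, fun β =>
      if h : ∃ α', β ∈ Q' α' then {x | x a' ∈ {α' | β ∈ Q' α'}}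
      else {x | x a ∈ {α | β ∈ Q α}}, fun β => ?_, ?_⟩
    · by_cases h : ∃ α', β ∈ Q' α'
      · simp only [dif_pos h]; exact ⟨a', _, rfl⟩
      · simp only [dif_neg h]; exact ⟨a, _, rfl⟩
    · ext p
      simp only [Set.mem_union, Set.mem_setOf_eq]
      rw [hQ (p.1 a), hQ' (p.1 a')]
      simp only [Set.mem_setOf_eq]
      by_cases h : ∃ α', p.2 b0 ∈ Q' α'
      · simp only [dif_pos h]
        simp only [Set.mem_setOf_eq]
        constructor
        · rintro (h1' | h2')
          · obtain ⟨α'w, hw⟩ := h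
            exact absurd hw (hQQ (p.1 a) α'w (p.2 b0) h1')
          · exact h2'
        · exact Or.inr
      · simp only [dif_neg h]
        simp only [Set.mem_setOf_eq]
        push_neg at h
        constructor
        · rintro (h1' | h2')
          · exact h1'
          · exact absurd h2' (h (p.1 a'))
        · exact Or.inl

lemma lform_swap_iff {s : Set ((∀ i, U i) × (∀ j, V j))} :
    LForm V U (Prod.swap ⁻¹' s) ↔ RForm U V s := by
  constructor
  · rintro ⟨b, S, hS, hEq⟩
    refine ⟨b, S, hS, ?_⟩
    ext p
    have h1 : p.swap ∈ Prod.swap ⁻¹' s ↔ p ∈ s := by simp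
    rw [← h1, hEq]; rfl
  · rintro ⟨b, S, hS, rfl⟩
    exact ⟨b, S, hS, by ext q; rfl⟩

lemma rform_swap_iff {s : Set ((∀ i, U i) × (∀ j, V j))} :
    RForm V U (Prod.swap ⁻¹' s) ↔ LForm U V s := by
  constructor
  · rintro ⟨a, R, hR, hEq⟩
    refine ⟨a, R, hR, ?_⟩
    ext p
    have h1 : p.swap ∈ Prod.swap ⁻¹' s ↔ p ∈ s := by simp
    rw [← h1, hEq]; rfl
  · rintro ⟨a, R, hR, rfl⟩
    exact ⟨a, R, hR, by ext q; rfl⟩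

lemma rform_union (hU : ∀ i, Nonempty (U i)) (hV : ∀ j, Nonempty (V j))
    {s t : Set ((∀ i, U i) × (∀ j, V j))}
    (hs : RForm U V s) (ht : RForm U V t) (hd : Disjoint s t) :
    Good U V (s ∪ t) := by
  have h := lform_union hV hU (lform_swap_iff.mpr hs) (lform_swap_iff.mpr ht)
    (Disjoint.preimage _ hd)
  rw [← Set.preimage_union] at h
  rcases h with h | h
  · exact Or.inr (lform_swap_iff.mp h)
  · exact Or.inl (rform_swap_iff.mp h)

lemma lr_union (hU : ∀ i, Nonempty (U i)) (hV : ∀ j, Nonempty (V j))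
    {s t : Set ((∀ i, U i) × (∀ j, V j))}
    (hs : LForm U V s) (ht : RForm U V t) (hd : Disjoint s t) :
    Good U V (s ∪ t) := by
  obtain ⟨a, R, hR, hsEq⟩ := hs
  obtain ⟨b, S, hS, htEq⟩ := ht
  by_cases hA : ∀ β, ∃ P : Set (U a), S β = {x | x a ∈ P}
  · choose P hP using hA
    have ht' : LForm U V t := by
      refine ⟨a, fun α => {y | y b ∈ {β | α ∈ P β}}, fun α => ⟨b, _, rfl⟩, ?_⟩
      rw [htEq]; ext p
      simp only [Set.mem_setOf_eq]
      rw [hP (p.2 b)]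
      rfl
    exact lform_union hU hV ⟨a, R, hR, hsEq⟩ ht' hd
  by_cases hA' : ∀ α, ∃ Q : Set (V b), R α = {y | y b ∈ Q}
  · choose Q hQ using hA'
    have hs' : RForm U V s := by
      refine ⟨b, fun β => {x | x a ∈ {α | β ∈ Q α}}, fun β => ⟨a, _, rfl⟩, ?_⟩
      rw [hsEq]; ext p
      simp only [Set.mem_setOf_eq]
      rw [hQ (p.1 a)]
      rfl
    exact rform_union hU hV hs' ⟨b, S, hS, htEq⟩ hd
  exfalso
  push_neg at hA hA'
  obtain ⟨β0, hβ0⟩ := hA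
  obtain ⟨α0, hα0⟩ := hA'
  have hSne : (S β0).Nonempty := by
    rcases Set.eq_empty_or_nonempty (S β0) with he | h
    · exact absurd (by rw [he]; ext x; simp) (hβ0 ∅)
    · exact h
  have hRne : (R α0).Nonempty := by
    rcases Set.eq_empty_or_nonempty (R α0) with he | h
    · exact absurd (by rw [he]; ext y; simp) (hα0 ∅)
    · exact h
  obtain ⟨c, P0, hP0⟩ := hS β0
  obtain ⟨d, Q0, hQ0⟩ := hR α0
  have hca : c ≠ a := by
    rintro rfl
    exact hβ0 P0 hP0
  have hdb : d ≠ b := by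
    rintro rfl
    exact hα0 Q0 hQ0
  obtain ⟨x1, hx1⟩ := hSne
  have hγ : x1 c ∈ P0 := by rw [hP0] at hx1; exact hx1
  obtain ⟨y1, hy1⟩ := hRne
  have hδ : y1 d ∈ Q0 := by rw [hQ0] at hy1; exact hy1
  obtain ⟨x, hxa, hxc⟩ := exists_pi2 hU (Ne.symm hca) α0 (x1 c)
  obtain ⟨y, hyb, hyd⟩ := exists_pi2 hV (Ne.symm hdb) β0 (y1 d)
  have hps : (x, y) ∈ s := by
    rw [hsEq]
    show y ∈ R (x a)
    rw [hxa, hQ0]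
    show y d ∈ Q0
    rw [hyd]; exact hδ
  have hpt : (x, y) ∈ t := by
    rw [htEq]
    show x ∈ S (y b)
    rw [hyb, hP0]
    show x c ∈ P0
    rw [hxc]; exact hγ
  exact Set.disjoint_left.mp hd hps hpt

lemma good_union (hU : ∀ i, Nonempty (U i)) (hV : ∀ j, Nonempty (V j))
    {s t : Set ((∀ i, U i) × (∀ j, V j))}
    (hs : Good U V s) (ht : Good U V t) (hd : Disjoint s t) :
    Good U V (s ∪ t) := by
  rcases hs with hs | hs <;> rcases ht with ht | ht
  · exact lform_union hU hV hs ht hd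
  · exact lr_union hU hV hs ht hd
  · rw [Set.union_comm]
    exact lr_union hU hV ht hs hd.symm
  · exact rform_union hU hV hs ht hd

lemma good_empty (hN : 0 < N) (hM : 0 < M) :
    Good U V (∅ : Set ((∀ i, U i) × (∀ j, V j))) := by
  refine Or.inl ⟨⟨0, hN⟩, fun _ => ∅, fun _ => ⟨⟨0, hM⟩, ∅, by ext y; simp⟩, ?_⟩
  ext p; simp

lemma good_atom (a : Fin N) (α : U a) (b : Fin M) (β : V b) :
    Good U V (Box.atom a α b β) := by
  refine Or.inl ⟨a, fun α' => {y | α' = α ∧ y b = β},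
    fun α' => ⟨b, {β' | α' = α ∧ β' = β}, rfl⟩, ?_⟩
  ext p
  show p.1 a = α ∧ p.2 b = β ↔ _
  simp [Set.mem_setOf_eq]

lemma good_compl {s : Set ((∀ i, U i) × (∀ j, V j))}
    (hs : Good U V s) : Good U V sᶜ := by
  rcases hs with ⟨a, R, hR, rfl⟩ | ⟨b, S, hS, rfl⟩
  · refine Or.inl ⟨a, fun α => (R α)ᶜ, fun α => ?_, ?_⟩
    · obtain ⟨b, Q, hQ⟩ := hR α
      exact ⟨b, Qᶜ, by show (R α)ᶜ = _; rw [hQ]; ext y; simp⟩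
    · ext p; simp
  · refine Or.inr ⟨b, fun β => (S β)ᶜ, fun β => ?_, ?_⟩
    · obtain ⟨a, P, hP⟩ := hS β
      exact ⟨a, Pᶜ, by show (S β)ᶜ = _; rw [hP]; ext x; simp⟩
    · ext p; simp

lemma good_iUnion (hN : 0 < N) (hM : 0 < M)
    (hU : ∀ i, Nonempty (U i)) (hV : ∀ j, Nonempty (V j)) :
    ∀ (n : ℕ) (f : Fin n → Set ((∀ i, U i) × (∀ j, V j))),
    (∀ i, Good U V (f i)) → (∀ i j, i ≠ j → Disjoint (f i) (f j)) →
    Good U V (⋃ i, f i) := by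
  intro n
  induction n with
  | zero =>
    intro f _ _
    rw [Set.iUnion_of_empty]
    exact good_empty hN hM
  | succ n ih =>
    intro f hf hd
    have hsplit : (⋃ i, f i) = f 0 ∪ ⋃ i : Fin n, f i.succ := by
      ext p
      simp only [Set.mem_iUnion, Set.mem_union]
      constructor
      · rintro ⟨i, hi⟩
        rcases Fin.eq_zero_or_eq_succ i with h0 | ⟨j, hj⟩
        · left; rwa [h0] at hi
        · right; exact ⟨j, by rwa [hj] at hi⟩
      · rintro (h | ⟨j, hj⟩)
        · exact ⟨0, h⟩
        · exact ⟨j.succ, hj⟩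
    rw [hsplit]
    refine good_union hU hV (hf 0)
      (ih _ (fun i => hf i.succ) (fun i j hij => hd _ _ (by simpa using hij))) ?_
    exact Set.disjoint_iUnion_right.mpr fun i => hd 0 i.succ (Fin.succ_ne_zero i).symm

lemma logic_good (hN : 0 < N) (hM : 0 < M)
    (hU : ∀ i, Nonempty (U i)) (hV : ∀ j, Nonempty (V j))
    {s : Set ((∀ i, U i) × (∀ j, V j))} (h : Box.Logic U V s) : Good U V s := by
  induction h with
  | empty => exact good_empty hN hM
  | atom a α b β => exact good_atom a α b β
  | compl s hs ih => exact good_compl ih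
  | iUnion n f hf hd ih => exact good_iUnion hN hM hU hV n f ih hd

lemma good_sub_atom (hU : ∀ i, Nonempty (U i)) (hV : ∀ j, Nonempty (V j))
    {s : Set ((∀ i, U i) × (∀ j, V j))} (hg : Good U V s) (hne : s.Nonempty) :
    ∃ (a : Fin N) (α : U a) (b : Fin M) (β : V b), Box.atom a α b β ⊆ s := by
  rcases hg with ⟨a, R, hR, rfl⟩ | ⟨b, S, hS, rfl⟩
  · obtain ⟨p, hp⟩ := hne
    obtain ⟨b0, Q, hQ⟩ := hR (p.1 a)
    have hp' : p.2 b0 ∈ Q := by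
      have : p.2 ∈ R (p.1 a) := hp
      rw [hQ] at this; exact this
    refine ⟨a, p.1 a, b0, p.2 b0, ?_⟩
    rintro q ⟨hq1, hq2⟩
    show q.2 ∈ R (q.1 a)
    rw [hq1, hQ]
    show q.2 b0 ∈ Q
    rw [hq2]; exact hp'
  · obtain ⟨p, hp⟩ := hne
    obtain ⟨a0, P, hP⟩ := hS (p.2 b)
    have hp' : p.1 a0 ∈ P := by
      have : p.1 ∈ S (p.2 b) := hp
      rw [hP] at this; exact this
    refine ⟨a0, p.1 a0, b, p.2 b, ?_⟩
    rintro q ⟨hq1, hq2⟩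
    show q.1 ∈ S (q.2 b)
    rw [hq2, hP]
    show q.1 a0 ∈ P
    rw [hq1]; exact hp'

lemma atom_subset_atom
    (hU2 : ∀ (i : Fin N) (x : U i), ∃ x', x' ≠ x)
    (hV2 : ∀ (j : Fin M) (y : V j), ∃ y', y' ≠ y)
    (hUne : ∀ i, Nonempty (U i)) (hVne : ∀ j, Nonempty (V j))
    {a c : Fin N} {α : U a} {γ : U c} {b d : Fin M} {β : V b} {δ : V d}
    (h : Box.atom c γ d δ ⊆ Box.atom a α b β) :
    Box.atom c γ d δ = Box.atom a α b β := by
  have hca : c = a := by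
    by_contra hne
    obtain ⟨α', hα'⟩ := hU2 a α
    obtain ⟨x, hxc, hxa⟩ := exists_pi2 hUne (show c ≠ a from hne) γ α'
    obtain ⟨y, hyd⟩ := exists_pi hVne d δ
    have hm := h (show (x, y) ∈ Box.atom c γ d δ from ⟨hxc, hyd⟩)
    exact hα' (by rw [← hxa]; exact hm.1)
  subst hca
  have hdb : d = b := by
    by_contra hne
    obtain ⟨β', hβ'⟩ := hV2 b β
    obtain ⟨y, hyd, hyb⟩ := exists_pi2 hVne (show d ≠ b from hne) δ β'
    obtain ⟨x, hxc⟩ := exists_pi hUne c γ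
    have hm := h (show (x, y) ∈ Box.atom c γ d δ from ⟨hxc, hyd⟩)
    exact hβ' (by rw [← hyb]; exact hm.2)
  subst hdb
  obtain ⟨x, hxc⟩ := exists_pi hUne c γ
  obtain ⟨y, hyd⟩ := exists_pi hVne d δ
  have hm := h (show (x, y) ∈ Box.atom c γ d δ from ⟨hxc, hyd⟩)
  have hγα : γ = α := by rw [← hxc]; exact hm.1
  have hδβ : δ = β := by rw [← hyd]; exact hm.2
  rw [hγα, hδβ]

end S2Aux

theorem statement2 {N M : ℕ} (hN : 0 < N) (hM : 0 < M)
    (U : Fin N → Type) (V : Fin M → Type)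
    [∀ a, Fintype (U a)] [∀ b, Fintype (V b)]
    (hU : ∀ a, 2 ≤ Fintype.card (U a)) (hV : ∀ b, 2 ≤ Fintype.card (V b)) :
    (∀ s, Box.Logic U V s → s ≠ ∅ →
      ∃ (a : Fin N) (α : U a) (b : Fin M) (β : V b), Box.atom a α b β ⊆ s) ∧
    (∀ (r : Set ((∀ i, U i) × (∀ j, V j))) (a : Fin N) (α : U a)
        (b : Fin M) (β : V b), Box.Logic U V r → r ⊆ Box.atom a α b β →
      r = ∅ ∨ r = Box.atom a α b β) := by
  have hUne : ∀ i, Nonempty (U i) := fun i =>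
    Fintype.card_pos_iff.mp (lt_of_lt_of_le (by norm_num) (hU i))
  have hVne : ∀ j, Nonempty (V j) := fun j =>
    Fintype.card_pos_iff.mp (lt_of_lt_of_le (by norm_num) (hV j))
  have hU2 : ∀ (i : Fin N) (x : U i), ∃ x', x' ≠ x := fun i x =>
    Fintype.exists_ne_of_one_lt_card (lt_of_lt_of_le (by norm_num) (hU i)) x
  have hV2 : ∀ (j : Fin M) (y : V j), ∃ y', y' ≠ y := fun j y =>
    Fintype.exists_ne_of_one_lt_card (lt_of_lt_of_le (by norm_num) (hV j)) y
  have key1 : ∀ s, Box.Logic U V s → s ≠ ∅ →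
      ∃ (a : Fin N) (α : U a) (b : Fin M) (β : V b), Box.atom a α b β ⊆ s := by
    intro s hs hne
    exact S2Aux.good_sub_atom hUne hVne (S2Aux.logic_good hN hM hUne hVne hs)
      (Set.nonempty_iff_ne_empty.mpr hne)
  refine ⟨key1, ?_⟩
  intro r a α b β hr hsub
  have h1 : Box.Logic U V (r ∪ (Box.atom a α b β)ᶜ) := by
    have h2 := Box.Logic.iUnion 2
      (fun i => if i = 0 then r else (Box.atom a α b β)ᶜ) ?_ ?_
    · convert h2 using 1
      ext p
      simp only [Set.mem_iUnion, Set.mem_union]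
      rw [Fin.exists_fin_two]
      simp
    · intro i
      by_cases h : i = 0
      · simpa [h] using hr
      · simpa [h] using Box.Logic.compl _ (Box.Logic.atom a α b β)
    · have hdisj : Disjoint r (Box.atom a α b β)ᶜ :=
        Set.disjoint_left.mpr fun p hp hpc => hpc (hsub hp)
      intro i j hij
      fin_cases i <;> fin_cases j
      · exact absurd rfl hij
      · simpa using hdisj
      · simpa using hdisj.symm
      · exact absurd rfl hij
  have hlogic : Box.Logic U V (Box.atom a α b β \ r) := by
    have h3 := Box.Logic.compl _ h1
    convert h3 using 1
    ext p
    simp only [Set.mem_diff, Set.mem_compl_iff, Set.mem_union]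
    tauto
  rcases eq_or_ne (Box.atom a α b β \ r) ∅ with hd0 | hdne
  · right
    exact Set.Subset.antisymm hsub (Set.diff_eq_empty.mp hd0)
  · obtain ⟨c, γ, d, δ, hBA⟩ := key1 _ hlogic hdne
    have hBsub : Box.atom c γ d δ ⊆ Box.atom a α b β :=
      hBA.trans Set.diff_subset
    have hBeq := S2Aux.atom_subset_atom hU2 hV2 hUne hVne hBsub
    left
    rw [hBeq] at hBA
    ext p
    simp only [Set.mem_empty_iff_false, iff_false]
    intro hp
    exact (hBA (hsub hp)).2 hp
end

section
/- Let q ∈ ℒ and suppose the atom [aα,bβ] satisfies [aα,bβ] ⊆ q. Then at least one of the following holds: (i) there exists q' ∈ ℒ disjoint from [aα,bβ] with q = [aα,bβ] ∪ q'; (ii) there exists q' ∈ ℒ disjoint from [aα,𝟙] with q = [aα,𝟙] ∪ q'; (iii) there exists q' ∈ ℒ disjoint from [𝟙,bβ] with q = [𝟙,bβ] ∪ q'; (iv) q = Γ. -/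
set_option linter.unusedSectionVars false
set_option maxHeartbeats 1000000

namespace BoxAux

open Function

variable {I J : Type} [DecidableEq I] [DecidableEq J] {A : I → Type} {B : J → Type}

/-- membership in `s` depends only on `(x_i, y_{f x_i})`. -/
def dep (i : I) (f : A i → J) (s : Set ((∀ i, A i) × (∀ j, B j))) : Prop :=
  ∀ (α : A i) (p p' : (∀ i, A i) × (∀ j, B j)), p.1 i = α → p'.1 i = α →
    p.2 (f α) = p'.2 (f α) → p ∈ s → p' ∈ s

def sw (s : Set ((∀ i, A i) × (∀ j, B j))) : Set ((∀ j, B j) × (∀ i, A i)) :=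
  {w | (w.2, w.1) ∈ s}

lemma sw_sw (s : Set ((∀ i, A i) × (∀ j, B j))) : sw (sw s) = s := rfl

lemma sw_union (s t : Set ((∀ i, A i) × (∀ j, B j))) : sw (s ∪ t) = sw s ∪ sw t := rfl

lemma mem_sw {w : (∀ j, B j) × (∀ i, A i)} {s : Set ((∀ i, A i) × (∀ j, B j))} :
    w ∈ sw s ↔ (w.2, w.1) ∈ s := Iff.rfl

lemma sw_nonempty {s : Set ((∀ i, A i) × (∀ j, B j))} (hs : s.Nonempty) : (sw s).Nonempty := by
  obtain ⟨p, hp⟩ := hs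
  exact ⟨(p.2, p.1), hp⟩

lemma sw_disjoint {s t : Set ((∀ i, A i) × (∀ j, B j))} (h : Disjoint s t) :
    Disjoint (sw s) (sw t) := by
  rw [Set.disjoint_left] at h ⊢
  exact fun w hws hwt => h hws hwt

/-- L1: union of two disjoint sets depending on the same left coordinate. -/
lemma dep_union_same {i : I} {f g : A i → J} {s t : Set ((∀ i, A i) × (∀ j, B j))}
    (hf : dep i f s) (hg : dep i g t) (hst : Disjoint s t) :
    ∃ h : A i → J, dep i h (s ∪ t) := by
  classical
  refine ⟨fun α => if ∃ p ∈ s, p.1 i = α then f α else g α, ?_⟩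
  intro α p p' hp hp' hagree hmem
  dsimp only at hagree
  by_cases hex : ∃ q ∈ s, q.1 i = α
  · rw [if_pos hex] at hagree
    rcases hmem with hps | hpt
    · exact Or.inl (hf α p p' hp hp' hagree hps)
    · right
      by_cases hfg : f α = g α
      · exact hg α p p' hp hp' (by rw [← hfg]; exact hagree) hpt
      · exfalso
        obtain ⟨p₁, hp₁s, hp₁i⟩ := hex
        set z : (∀ i, A i) × (∀ j, B j) := (p.1, Function.update p.2 (f α) (p₁.2 (f α))) with hz
        have hzs : z ∈ s := hf α p₁ z hp₁i hp (Function.update_self _ _ _).symm hp₁s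
        have hzt : z ∈ t := hg α p z hp hp (Function.update_of_ne (Ne.symm hfg) _ _).symm hpt
        exact Set.disjoint_left.mp hst hzs hzt
  · rw [if_neg hex] at hagree
    rcases hmem with hps | hpt
    · exact absurd ⟨p, hps, hp⟩ hex
    · exact Or.inr (hg α p p' hp hp' hagree hpt)

/-- L2: union of two disjoint nonempty sets depending on different left coordinates
depends on a single right coordinate. -/
lemma dep_union_diff {i i' : I} {f : A i → J} {g : A i' → J}
    {s t : Set ((∀ i, A i) × (∀ j, B j))}
    (hii : i ≠ i') (hf : dep i f s) (hg : dep i' g t) (hst : Disjoint s t)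
    (hsne : s.Nonempty) (htne : t.Nonempty) :
    ∃ (j : J) (h : B j → I), dep j h (sw (s ∪ t)) := by
  classical
  obtain ⟨ps, hps⟩ := hsne
  obtain ⟨pt, hpt⟩ := htne
  -- step 1 : f (ps.1 i) = g (pt.1 i')
  have hfα₀ : f (ps.1 i) = g (pt.1 i') := by
    by_contra hne
    set z : (∀ i, A i) × (∀ j, B j) :=
      (Function.update ps.1 i' (pt.1 i'), Function.update pt.2 (f (ps.1 i)) (ps.2 (f (ps.1 i)))) with hzdef
    have hzs : z ∈ s := by
      refine hf (ps.1 i) ps z rfl ?_ ?_ hps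
      · exact Function.update_of_ne hii _ _
      · exact (Function.update_self _ _ _).symm
    have hzt : z ∈ t := by
      refine hg (pt.1 i') pt z rfl ?_ ?_ hpt
      · exact Function.update_self _ _ _
      · exact (Function.update_of_ne (Ne.symm hne) _ _).symm
    exact Set.disjoint_left.mp hst hzs hzt
  -- s depends only on (x_i, y_{g (pt.1 i')})
  have cs : dep (g (pt.1 i')) (fun _ => i) (sw s) := by
    intro γ w w' hw hw' hagree hwmem
    dsimp only at hagree
    by_cases hc : f (w.2 i) = g (pt.1 i')
    · refine hf (w.2 i) (w.2, w.1) (w'.2, w'.1) rfl hagree.symm ?_ hwmem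
      show w.1 (f (w.2 i)) = w'.1 (f (w.2 i))
      rw [hc]
      exact hw.trans hw'.symm
    · exfalso
      set z : (∀ i, A i) × (∀ j, B j) :=
        (Function.update w.2 i' (pt.1 i'), Function.update w.1 (g (pt.1 i')) (pt.2 (g (pt.1 i')))) with hzdef
      have hzs : z ∈ s := by
        refine hf (w.2 i) (w.2, w.1) z rfl ?_ ?_ hwmem
        · exact Function.update_of_ne hii _ _
        · exact (Function.update_of_ne hc _ _).symm
      have hzt : z ∈ t := by
        refine hg (pt.1 i') pt z rfl ?_ ?_ hpt
        · exact Function.update_self _ _ _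
        · exact (Function.update_self _ _ _).symm
      exact Set.disjoint_left.mp hst hzs hzt
  have ct : dep (g (pt.1 i')) (fun _ => i') (sw t) := by
    intro γ w w' hw hw' hagree hwmem
    dsimp only at hagree
    by_cases hc : g (w.2 i') = g (pt.1 i')
    · refine hg (w.2 i') (w.2, w.1) (w'.2, w'.1) rfl hagree.symm ?_ hwmem
      show w.1 (g (w.2 i')) = w'.1 (g (w.2 i'))
      rw [hc]
      exact hw.trans hw'.symm
    · exfalso
      set z : (∀ i, A i) × (∀ j, B j) :=
        (Function.update w.2 i (ps.1 i), Function.update w.1 (g (pt.1 i')) (ps.2 (g (pt.1 i')))) with hzdef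
      have hzt : z ∈ t := by
        refine hg (w.2 i') (w.2, w.1) z rfl ?_ ?_ hwmem
        · exact Function.update_of_ne (Ne.symm hii) _ _
        · exact (Function.update_of_ne hc _ _).symm
      have hzs : z ∈ s := by
        refine hf (ps.1 i) ps z rfl ?_ ?_ hps
        · exact Function.update_self _ _ _
        · show ps.2 (f (ps.1 i)) = z.2 (f (ps.1 i))
          rw [hfα₀]
          exact (Function.update_self _ _ _).symm
      exact Set.disjoint_left.mp hst hzs hzt
  obtain ⟨h, hh⟩ := dep_union_same cs ct (sw_disjoint hst)
  exact ⟨g (pt.1 i'), h, hh⟩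

/-- L3: mixed case. -/
lemma dep_mixed {i : I} {j : J} {f : A i → J} {g : B j → I}
    {s t : Set ((∀ i, A i) × (∀ j, B j))}
    (hf : dep i f s) (hg : dep j g (sw t)) (hst : Disjoint s t) :
    (dep j (fun _ => i) (sw s)) ∨ (dep i (fun _ => j) t) := by
  classical
  by_cases Hs : ∀ P P' : (∀ i, A i) × (∀ j, B j), P.1 i = P'.1 i → P.2 j = P'.2 j →
      P ∈ s → P' ∈ s
  · left
    intro γ w w' hw hw' hagree hwmem
    dsimp only at hagree
    exact Hs (w.2, w.1) (w'.2, w'.1) hagree (hw.trans hw'.symm) hwmem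
  · right
    push_neg at Hs
    obtain ⟨P₀, P₀', hP1, hP2, hP₀s, hP₀'ns⟩ := Hs
    have hfα₀ : f (P₀.1 i) ≠ j := by
      intro hc
      refine hP₀'ns (hf (P₀.1 i) P₀ P₀' rfl hP1.symm ?_ hP₀s)
      show P₀.2 (f (P₀.1 i)) = P₀'.2 (f (P₀.1 i))
      rw [hc]
      exact hP2
    intro α P P' hP hP' hagree hPt
    dsimp only at hagree
    by_cases hc : g (P.2 j) = i
    · have : (P'.2, P'.1) ∈ sw t := by
        refine hg (P.2 j) (P.2, P.1) (P'.2, P'.1) rfl hagree.symm ?_ hPt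
        show P.1 (g (P.2 j)) = P'.1 (g (P.2 j))
        rw [hc, hP, hP']
      exact this
    · exfalso
      set z : (∀ i, A i) × (∀ j, B j) :=
        (Function.update P.1 i (P₀.1 i), Function.update P.2 (f (P₀.1 i)) (P₀.2 (f (P₀.1 i)))) with hzdef
      have hzs : z ∈ s := by
        refine hf (P₀.1 i) P₀ z rfl ?_ ?_ hP₀s
        · exact Function.update_self _ _ _
        · exact (Function.update_self _ _ _).symm
      have hzt : z ∈ t := by
        have hmem : (z.2, z.1) ∈ sw t := by
          refine hg (P.2 j) (P.2, P.1) (z.2, z.1) rfl ?_ ?_ hPt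
          · show z.2 j = P.2 j
            exact Function.update_of_ne (Ne.symm hfα₀) _ _
          · show P.1 (g (P.2 j)) = z.1 (g (P.2 j))
            exact (Function.update_of_ne hc _ _).symm
        exact hmem
      exact Set.disjoint_left.mp hst hzs hzt


def cell (i : I) (α : A i) (j : J) (β : B j) : Set ((∀ i, A i) × (∀ j, B j)) :=
  {p | p.1 i = α ∧ p.2 j = β}

def lineL (i : I) (α : A i) : Set ((∀ i, A i) × (∀ j, B j)) := {p | p.1 i = α}

def lineR (j : J) (β : B j) : Set ((∀ i, A i) × (∀ j, B j)) := {p | p.2 j = β}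

/-- Main structural lemma: if `s` depends on `(x_i, y_{f x_i})` and contains the
cell `[i₀α₀, j₀β₀]`, then the cell, or one of the two lines through it, splits off. -/
lemma mainDep (i₀ : I) (α₀ : A i₀) (j₀ : J) (β₀ : B j₀)
    (s : Set ((∀ i, A i) × (∀ j, B j))) (i : I) (f : A i → J)
    (h : dep i f s) (hsub : cell i₀ α₀ j₀ β₀ ⊆ s) :
    (∃ f', dep i f' (s \ cell i₀ α₀ j₀ β₀)) ∨
    (lineL i₀ α₀ ⊆ s ∧ ∃ f', dep i f' (s \ lineL i₀ α₀)) ∨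
    (lineR j₀ β₀ ⊆ s ∧ ∃ f', dep i f' (s \ lineR j₀ β₀)) := by
  classical
  by_cases hi : i = i₀
  · subst hi
    by_cases hj : f α₀ = j₀
    · -- the cell splits off
      left
      refine ⟨f, ?_⟩
      intro α p p' hp hp' hy hmem
      obtain ⟨hps, hpc⟩ := hmem
      refine ⟨h α p p' hp hp' hy hps, ?_⟩
      intro hp'c
      obtain ⟨h1, h2⟩ := hp'c
      have hα : α = α₀ := hp'.symm.trans h1
      rw [hα, hj] at hy
      exact hpc ⟨hp.trans hα, hy.trans h2⟩
    · -- the left line splits off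
      right; left
      have hline : lineL i α₀ ⊆ s := by
        intro p hp
        have hp'' : (p.1, Function.update p.2 j₀ β₀) ∈ cell i α₀ j₀ β₀ :=
          ⟨hp, Function.update_self _ _ _⟩
        refine h α₀ (p.1, Function.update p.2 j₀ β₀) p hp hp ?_ (hsub hp'')
        show Function.update p.2 j₀ β₀ (f α₀) = p.2 (f α₀)
        exact Function.update_of_ne hj _ _
      refine ⟨hline, f, ?_⟩
      intro α p p' hp hp' hy hmem
      obtain ⟨hps, hpl⟩ := hmem
      refine ⟨h α p p' hp hp' hy hps, ?_⟩
      intro hp'l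
      exact hpl (show p.1 i = α₀ from hp.trans (hp'.symm.trans hp'l))
  · -- i ≠ i₀ : the right line splits off
    right; right
    have hline : lineR j₀ β₀ ⊆ s := by
      intro p hp
      have hp'' : (Function.update p.1 i₀ α₀, p.2) ∈ cell i₀ α₀ j₀ β₀ :=
        ⟨Function.update_self _ _ _, hp⟩
      refine h (p.1 i) (Function.update p.1 i₀ α₀, p.2) p ?_ rfl rfl (hsub hp'')
      show Function.update p.1 i₀ α₀ i = p.1 i
      exact Function.update_of_ne hi _ _
    refine ⟨hline, fun α => if ∀ r : (∀ i, A i) × (∀ j, B j), r.1 i = α → r ∈ s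
      then j₀ else f α, ?_⟩
    intro α p p' hp hp' hy hmem
    dsimp only at hy
    obtain ⟨hps, hpl⟩ := hmem
    by_cases hfull : ∀ r : (∀ i, A i) × (∀ j, B j), r.1 i = α → r ∈ s
    · rw [if_pos hfull] at hy
      exact ⟨hfull p' hp', fun hp'l => hpl (show p.2 j₀ = β₀ from hy.trans hp'l)⟩
    · rw [if_neg hfull] at hy
      have hfj : f α = j₀ := by
        by_contra hne
        refine hfull fun r hr => ?_
        have hr' : (r.1, Function.update r.2 j₀ β₀) ∈ lineR j₀ β₀ :=
          Function.update_self _ _ _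
        refine h α (r.1, Function.update r.2 j₀ β₀) r hr hr ?_ (hline hr')
        show Function.update r.2 j₀ β₀ (f α) = r.2 (f α)
        exact Function.update_of_ne hne _ _
      refine ⟨h α p p' hp hp' hy hps, ?_⟩
      intro hp'l
      rw [hfj] at hy
      exact hpl (show p.2 j₀ = β₀ from hy.trans hp'l)


section Glue

variable {N M : ℕ} {U : Fin N → Type} {V : Fin M → Type}

def GoodLR (U : Fin N → Type) (V : Fin M → Type)
    (q : Set ((∀ i, U i) × (∀ j, V j))) : Prop :=
  (∃ (a : Fin N) (bf : U a → Fin M), dep a bf q) ∨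
  (∃ (b : Fin M) (af : V b → Fin N), dep b af (sw q))

lemma logic_iUnion_fintype {ι : Type} [Fintype ι] (g : ι → Set ((∀ i, U i) × (∀ j, V j)))
    (hg : ∀ k, Box.Logic U V (g k)) (hd : ∀ k k', k ≠ k' → Disjoint (g k) (g k')) :
    Box.Logic U V (⋃ k, g k) := by
  classical
  let e := (Fintype.equivFin ι).symm
  rw [← Function.Surjective.iUnion_comp e.surjective g]
  exact Box.Logic.iUnion _ _ (fun m => hg _)
    (fun m m' hne => hd _ _ (fun hc => hne (e.injective hc)))

lemma logic_of_depL [∀ a, Fintype (U a)] [∀ b, Fintype (V b)]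
    {q : Set ((∀ i, U i) × (∀ j, V j))}
    (a : Fin N) (bf : U a → Fin M) (h : dep a bf q) : Box.Logic U V q := by
  classical
  set Q : ∀ α : U a, Set (V (bf α)) :=
    fun α => {β | ∃ p, p ∈ q ∧ p.1 a = α ∧ p.2 (bf α) = β} with hQ
  letI : ∀ α, Fintype (Q α) := fun α => (Set.toFinite _).fintype
  have hrep : q = ⋃ σ : Σ α : U a, Q α, Box.atom a σ.1 (bf σ.1) σ.2 := by
    ext p
    simp only [Set.mem_iUnion, Box.atom, Set.mem_setOf_eq]
    constructor
    · intro hp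
      exact ⟨⟨p.1 a, ⟨p.2 (bf (p.1 a)), ⟨p, hp, rfl, rfl⟩⟩⟩, rfl, rfl⟩
    · rintro ⟨⟨αv, ⟨βv, ⟨p₀, hp₀q, hp₀a, hp₀b⟩⟩⟩, hpa, hpb⟩
      exact h αv p₀ p hp₀a hpa (by rw [hp₀b]; exact hpb.symm) hp₀q
  rw [hrep]
  refine logic_iUnion_fintype _ (fun σ => Box.Logic.atom _ _ _ _) ?_
  rintro ⟨α₁, β₁⟩ ⟨α₂, β₂⟩ hne
  rw [Set.disjoint_left]
  rintro p ⟨hpa1, hpb1⟩ ⟨hpa2, hpb2⟩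
  have hα : α₁ = α₂ := hpa1.symm.trans hpa2
  subst hα
  exact hne (congrArg (Sigma.mk α₁) (Subtype.ext (hpb1.symm.trans hpb2)))

lemma logic_of_depR [∀ a, Fintype (U a)] [∀ b, Fintype (V b)]
    {q : Set ((∀ i, U i) × (∀ j, V j))}
    (b : Fin M) (af : V b → Fin N) (h : dep b af (sw q)) : Box.Logic U V q := by
  classical
  set Q : ∀ β : V b, Set (U (af β)) :=
    fun β => {αv | ∃ p : (∀ i, U i) × (∀ j, V j), p ∈ q ∧ p.2 b = β ∧ p.1 (af β) = αv} with hQ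
  letI : ∀ β, Fintype (Q β) := fun β => (Set.toFinite _).fintype
  have hrep : q = ⋃ σ : Σ β : V b, Q β, Box.atom (af σ.1) σ.2 b σ.1 := by
    ext p
    simp only [Set.mem_iUnion, Box.atom, Set.mem_setOf_eq]
    constructor
    · intro hp
      exact ⟨⟨p.2 b, ⟨p.1 (af (p.2 b)), ⟨p, hp, rfl, rfl⟩⟩⟩, rfl, rfl⟩
    · rintro ⟨⟨βv, ⟨αv, ⟨p₀, hp₀q, hp₀b, hp₀a⟩⟩⟩, hpa, hpb⟩
      have : (p.2, p.1) ∈ sw q := by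
        refine h βv (p₀.2, p₀.1) (p.2, p.1) hp₀b hpb ?_ hp₀q
        show p₀.1 (af βv) = p.1 (af βv)
        rw [hp₀a]; exact hpa.symm
      exact this
  rw [hrep]
  refine logic_iUnion_fintype _ (fun σ => Box.Logic.atom _ _ _ _) ?_
  rintro ⟨β₁, α₁⟩ ⟨β₂, α₂⟩ hne
  rw [Set.disjoint_left]
  rintro p ⟨hpa1, hpb1⟩ ⟨hpa2, hpb2⟩
  have hβ : β₁ = β₂ := hpb1.symm.trans hpb2
  subst hβ
  exact hne (congrArg (Sigma.mk β₁) (Subtype.ext (hpa1.symm.trans hpa2)))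

lemma good_empty (hN : 0 < N) (hM : 0 < M) :
    GoodLR U V (∅ : Set ((∀ i, U i) × (∀ j, V j))) :=
  Or.inl ⟨⟨0, hN⟩, fun _ => ⟨0, hM⟩,
    fun _ p _ _ _ _ hp => absurd hp (Set.notMem_empty p)⟩

lemma good_merge {s t : Set ((∀ i, U i) × (∀ j, V j))}
    (hst : Disjoint s t) (hs : GoodLR U V s) (ht : GoodLR U V t) :
    GoodLR U V (s ∪ t) := by
  rcases Set.eq_empty_or_nonempty s with hse | hsne
  · rw [hse, Set.empty_union]; exact ht
  rcases Set.eq_empty_or_nonempty t with hte | htne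
  · rw [hte, Set.union_empty]; exact hs
  rcases hs with ⟨a, bf, hds⟩ | ⟨b, af, hds⟩ <;> rcases ht with ⟨a', bf', hdt⟩ | ⟨b', af', hdt⟩
  · -- LL
    by_cases haa : a = a'
    · subst haa
      obtain ⟨h, hh⟩ := dep_union_same hds hdt hst
      exact Or.inl ⟨a, h, hh⟩
    · obtain ⟨j, h, hh⟩ := dep_union_diff haa hds hdt hst hsne htne
      exact Or.inr ⟨j, h, hh⟩
  · -- LR
    rcases dep_mixed hds hdt hst with hc | hc
    · obtain ⟨h, hh⟩ := dep_union_same hc hdt (sw_disjoint hst)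
      exact Or.inr ⟨b', h, hh⟩
    · obtain ⟨h, hh⟩ := dep_union_same hds hc hst
      exact Or.inl ⟨a, h, hh⟩
  · -- RL
    rcases dep_mixed hdt hds hst.symm with hc | hc
    · obtain ⟨h, hh⟩ := dep_union_same hds hc (sw_disjoint hst)
      exact Or.inr ⟨b, h, hh⟩
    · obtain ⟨h, hh⟩ := dep_union_same hc hdt hst
      exact Or.inl ⟨a', h, hh⟩
  · -- RR
    by_cases hbb : b = b'
    · subst hbb
      obtain ⟨h, hh⟩ := dep_union_same hds hdt (sw_disjoint hst)
      exact Or.inr ⟨b, h, hh⟩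
    · obtain ⟨i, h, hh⟩ := dep_union_diff hbb hds hdt (sw_disjoint hst)
        (sw_nonempty hsne) (sw_nonempty htne)
      exact Or.inl ⟨i, h, hh⟩

lemma good_iUnion (hN : 0 < N) (hM : 0 < M) :
    ∀ (n : ℕ) (f : Fin n → Set ((∀ i, U i) × (∀ j, V j))), (∀ i, GoodLR U V (f i)) →
      (∀ i j, i ≠ j → Disjoint (f i) (f j)) → GoodLR U V (⋃ i, f i) := by
  intro n
  induction n with
  | zero =>
    intro f _ _
    rw [Set.iUnion_of_empty f]
    exact good_empty hN hM
  | succ n ih =>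
    intro f hg hd
    have hsplit : ⋃ i, f i = f 0 ∪ ⋃ i : Fin n, f i.succ := by
      ext p
      simp only [Set.mem_iUnion, Set.mem_union]
      constructor
      · rintro ⟨i, hi⟩
        rcases Fin.eq_zero_or_eq_succ i with h0 | ⟨j, hj⟩
        · left; rwa [h0] at hi
        · right; exact ⟨j, by rwa [hj] at hi⟩
      · rintro (h0 | ⟨j, hj⟩)
        · exact ⟨0, h0⟩
        · exact ⟨j.succ, hj⟩
    rw [hsplit]
    refine good_merge ?_ (hg 0)
      (ih _ (fun i => hg _) (fun i j hne => hd _ _ (fun hc => hne (Fin.succ_injective _ hc))))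
    exact Set.disjoint_iUnion_right.mpr fun i => hd 0 i.succ (Fin.succ_ne_zero i).symm

lemma good_of_logic (hN : 0 < N) (hM : 0 < M)
    {q : Set ((∀ i, U i) × (∀ j, V j))} (hq : Box.Logic U V q) : GoodLR U V q := by
  induction hq with
  | empty => exact good_empty hN hM
  | atom a α b β =>
    refine Or.inl ⟨a, fun _ => b, ?_⟩
    intro α' p p' hp hp' hy hmem
    obtain ⟨h1, h2⟩ := hmem
    exact ⟨hp'.trans (hp.symm.trans h1), hy.symm.trans h2⟩
  | compl s hs ih =>
    rcases ih with ⟨a, bf, hd⟩ | ⟨b, af, hd⟩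
    · refine Or.inl ⟨a, bf, ?_⟩
      intro α p p' hp hp' hy hpc hp's
      exact hpc (hd α p' p hp' hp hy.symm hp's)
    · refine Or.inr ⟨b, af, ?_⟩
      intro β w w' hw hw' hy hwc hw's
      exact hwc (hd β w' w hw' hw hy.symm hw's)
  | iUnion n f hf hd ih => exact good_iUnion hN hM n f ih hd

end Glue

end BoxAux

theorem statement3 {N M : ℕ} (hN : 0 < N) (hM : 0 < M)
    (U : Fin N → Type) (V : Fin M → Type)
    [∀ a, Fintype (U a)] [∀ b, Fintype (V b)]
    (hU : ∀ a, 2 ≤ Fintype.card (U a)) (hV : ∀ b, 2 ≤ Fintype.card (V b))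
    (q : Set ((∀ i, U i) × (∀ j, V j))) (hq : Box.Logic U V q)
    (a : Fin N) (α : U a) (b : Fin M) (β : V b)
    (hsub : Box.atom a α b β ⊆ q) :
    (∃ q', Box.Logic U V q' ∧ Disjoint (Box.atom a α b β) q' ∧
      q = Box.atom a α b β ∪ q') ∨
    (∃ q', Box.Logic U V q' ∧ Disjoint (Box.locL U V a {α}) q' ∧
      q = Box.locL U V a {α} ∪ q') ∨
    (∃ q', Box.Logic U V q' ∧ Disjoint (Box.locR U V b {β}) q' ∧
      q = Box.locR U V b {β} ∪ q') ∨
    q = Set.univ := by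
  classical
  open BoxAux in
  have hdisj : ∀ X : Set ((∀ i, U i) × (∀ j, V j)), Disjoint X (q \ X) :=
    fun X => Set.disjoint_left.mpr fun p hp hp' => hp'.2 hp
  rcases BoxAux.good_of_logic hN hM hq with ⟨a', bf, hdep⟩ | ⟨b', af, hdep⟩
  · rcases BoxAux.mainDep a α b β q a' bf hdep hsub with
      ⟨f', hq'⟩ | ⟨hline, f', hq'⟩ | ⟨hline, f', hq'⟩
    · exact Or.inl ⟨q \ Box.atom a α b β, BoxAux.logic_of_depL a' f' hq',
        hdisj _, (Set.union_diff_cancel hsub).symm⟩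
    · refine Or.inr (Or.inl ⟨q \ Box.locL U V a {α}, BoxAux.logic_of_depL a' f' hq',
        hdisj _, (Set.union_diff_cancel ?_).symm⟩)
      exact fun p hp => hline hp
    · refine Or.inr (Or.inr (Or.inl ⟨q \ Box.locR U V b {β}, BoxAux.logic_of_depL a' f' hq',
        hdisj _, (Set.union_diff_cancel ?_).symm⟩))
      exact fun p hp => hline hp
  · have hsub' : BoxAux.cell b β a α ⊆ BoxAux.sw q := fun w hw => hsub ⟨hw.2, hw.1⟩
    rcases BoxAux.mainDep b β a α (BoxAux.sw q) b' af hdep hsub' with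
      ⟨f', hq'⟩ | ⟨hline, f', hq'⟩ | ⟨hline, f', hq'⟩
    · have hcell : BoxAux.sw q \ BoxAux.cell b β a α = BoxAux.sw (q \ Box.atom a α b β) := by
        ext w
        constructor
        · rintro ⟨h1, h2⟩
          exact ⟨h1, fun hc => h2 ⟨hc.2, hc.1⟩⟩
        · rintro ⟨h1, h2⟩
          exact ⟨h1, fun hc => h2 ⟨hc.2, hc.1⟩⟩
      rw [hcell] at hq'
      exact Or.inl ⟨q \ Box.atom a α b β, BoxAux.logic_of_depR b' f' hq',
        hdisj _, (Set.union_diff_cancel hsub).symm⟩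
    · have hlocR : Box.locR U V b {β} ⊆ q := fun p hp => hline (show (p.2, p.1).1 b = β from hp)
      have hcell : BoxAux.sw q \ BoxAux.lineL b β = BoxAux.sw (q \ Box.locR U V b {β}) := rfl
      rw [hcell] at hq'
      exact Or.inr (Or.inr (Or.inl ⟨q \ Box.locR U V b {β}, BoxAux.logic_of_depR b' f' hq',
        hdisj _, (Set.union_diff_cancel hlocR).symm⟩))
    · have hlocL : Box.locL U V a {α} ⊆ q := fun p hp => hline (show (p.2, p.1).2 a = α from hp)
      have hcell : BoxAux.sw q \ BoxAux.lineR a α = BoxAux.sw (q \ Box.locL U V a {α}) := rfl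
      rw [hcell] at hq'
      exact Or.inr (Or.inl ⟨q \ Box.locL U V a {α}, BoxAux.logic_of_depR b' f' hq',
        hdisj _, (Set.union_diff_cancel hlocL).symm⟩)
end

section
/- Let {(a_i, α_i, b_i, β_i)}_{i∈I} and {(c_j, γ_j, d_j, δ_j)}_{j∈J} be two finite families of quadruples (with α_i ∈ U_{a_i}, β_i ∈ V_{b_i}, γ_j ∈ U_{c_j}, δ_j ∈ V_{d_j}) such that within each family the corresponding atoms are pairwise disjoint and pairwise distinct, and such that ⋃_{i∈I} [a_iα_i, b_iβ_i] = ⋃_{j∈J} [c_jγ_j, d_jδ_j]. Then for every PR-state P one has Σ_{i∈I} P(α_iβ_i | a_ib_i) = Σ_{j∈J} P(γ_jδ_j | c_jd_j). -/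
/-! A PR-state is the table of two-point marginals of a signed weight `w` on `Γ`. Let `μ₀` be the
product of the one-input marginals, and for each input pair `(a, b)` let `ν_ab` draw `(x_a, y_b)`
from `P(·· | ab)` and every other outcome independently from its marginal. By non-signalling,
`ν_ab` agrees with `μ₀` on each atom with inputs `(a', b') ≠ (a, b)`, so
`w = μ₀ + ∑_{a,b} (ν_ab - μ₀)` gives each atom `[aα, bβ]` the weight `P(αβ | ab)`. Both sides of
the theorem are then the `w`-mass of the same disjoint union of atoms. -/

open Finset Function

section
variable {R ι : Type*} [CommSemiring R] [DecidableEq ι] {K : ι → Type*} [∀ i, Fintype (K i)]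
  [∀ i, DecidableEq (K i)]

theorem sum_update_single_eq_one {p : ∀ i, K i → R} (hp : ∀ i, ∑ ξ, p i ξ = 1) (a : ι) (ξ : K a)
    (i : ι) : ∑ η, update p a (Pi.single ξ 1) i η = 1 := by
  rcases eq_or_ne i a with rfl | hi
  · simp
  · simp [update_of_ne hi, hp i]

variable [Fintype ι]

theorem Fintype.sum_filter_apply_eq_prod (c : ∀ i, K i → R) (a : ι) (α : K a) :
    ∑ x : ∀ i, K i with x a = α, ∏ i, c i (x i) = c a α * ∏ i ∈ univ.erase a, ∑ ξ, c i ξ := by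
  have hfilter : (univ.filter fun x : ∀ i, K i => x a = α) =
      Fintype.piFinset (update (fun _ => univ) a {α}) := by
    ext x
    simp only [mem_filter, mem_univ, true_and, Fintype.mem_piFinset]
    constructor
    · rintro rfl i
      rcases eq_or_ne i a with rfl | hi <;> simp [*]
    · intro h
      simpa using h a
  rw [hfilter, ← prod_univ_sum, ← mul_prod_erase univ _ (mem_univ a)]
  congr 1
  · simp
  · exact Finset.prod_congr rfl fun i hi => by rw [update_of_ne (ne_of_mem_erase hi)]

theorem Fintype.sum_filter_apply_eq_of_sum_eq_one {c : ∀ i, K i → R} (hc : ∀ i, ∑ ξ, c i ξ = 1)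
    (a : ι) (α : K a) : ∑ x : ∀ i, K i with x a = α, ∏ i, c i (x i) = c a α := by
  rw [Fintype.sum_filter_apply_eq_prod, Finset.prod_eq_one fun i _ => hc i, mul_one]

end

open scoped Classical in
theorem Finset.sum_filter_mem_iUnion {α ι M : Type*} [Fintype α] [Fintype ι] [AddCommMonoid M]
    (f : ι → Set α) (hf : Pairwise (Disjoint on f)) (w : α → M) :
    ∑ z with z ∈ ⋃ i, f i, w z = ∑ i, ∑ z with z ∈ f i, w z := by
  rw [← sum_biUnion]
  · congr 1
    ext z
    simp
  · intro i _ j _ hij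
    exact disjoint_filter.mpr fun z _ hi hj => (hf hij).ne_of_mem hi hj rfl

noncomputable section

namespace Box

open scoped Classical

variable {N M : ℕ} {U : Fin N → Type} {V : Fin M → Type}
  [∀ a, Fintype (U a)] [∀ b, Fintype (V b)]

theorem sum_filter_mem_atom_mul (f : (∀ i, U i) → ℝ) (g : (∀ j, V j) → ℝ)
    (a : Fin N) (α : U a) (b : Fin M) (β : V b) :
    ∑ z with z ∈ atom a α b β, f z.1 * g z.2
      = (∑ x with x a = α, f x) * ∑ y with y b = β, g y := by
  rw [sum_filter, sum_filter, sum_filter, sum_mul_sum, Fintype.sum_prod_type]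
  refine sum_congr rfl fun x _ => sum_congr rfl fun y _ => ?_
  by_cases hx : x a = α <;> by_cases hy : y b = β <;> simp [atom, hx, hy]

namespace PRState

variable (P : PRState U V)

def leftMarginal [NeZero M] (a : Fin N) (α : U a) : ℝ := ∑ β, P.val a 0 α β

def rightMarginal [NeZero N] (b : Fin M) (β : V b) : ℝ := ∑ α, P.val 0 b α β

theorem sum_val_right [NeZero M] (a : Fin N) (b : Fin M) (α : U a) :
    ∑ β, P.val a b α β = P.leftMarginal a α :=
  P.nonsig_right a b 0 α

theorem sum_val_left [NeZero N] (a : Fin N) (b : Fin M) (β : V b) :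
    ∑ α, P.val a b α β = P.rightMarginal b β :=
  P.nonsig_left a 0 b β

theorem sum_leftMarginal [NeZero M] (a : Fin N) : ∑ α, P.leftMarginal a α = 1 :=
  P.normalized a 0

theorem sum_rightMarginal [NeZero N] (b : Fin M) : ∑ β, P.rightMarginal b β = 1 := by
  simp only [rightMarginal]
  rw [sum_comm, P.normalized]

variable [NeZero N] [NeZero M]

def productDist (z : (∀ i, U i) × (∀ j, V j)) : ℝ :=
  (∏ i, P.leftMarginal i (z.1 i)) * ∏ j, P.rightMarginal j (z.2 j)

/-- `update P.leftMarginal a (Pi.single ξ 1)` is the family of marginals with the outcome of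
input `a` pinned to `ξ`. -/
def pairDist (a : Fin N) (b : Fin M) (z : (∀ i, U i) × (∀ j, V j)) : ℝ :=
  ∑ ξ, ∑ η, P.val a b ξ η * ((∏ i, update P.leftMarginal a (Pi.single ξ 1) i (z.1 i)) *
    ∏ j, update P.rightMarginal b (Pi.single η 1) j (z.2 j))

def quasiDist (z : (∀ i, U i) × (∀ j, V j)) : ℝ :=
  P.productDist z + ∑ a, ∑ b, (P.pairDist a b z - P.productDist z)

theorem sum_productDist_atom (a : Fin N) (α : U a) (b : Fin M) (β : V b) :
    ∑ z with z ∈ atom a α b β, P.productDist z = P.leftMarginal a α * P.rightMarginal b β := by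
  simp only [productDist]
  rw [sum_filter_mem_atom_mul (fun x => ∏ i, P.leftMarginal i (x i))
      (fun y => ∏ j, P.rightMarginal j (y j)),
    Fintype.sum_filter_apply_eq_of_sum_eq_one P.sum_leftMarginal,
    Fintype.sum_filter_apply_eq_of_sum_eq_one P.sum_rightMarginal]

theorem sum_pairDist_atom (a a' : Fin N) (α : U a') (b b' : Fin M) (β : V b') :
    ∑ z with z ∈ atom a' α b' β, P.pairDist a b z = ∑ ξ, ∑ η, P.val a b ξ η *
      (update P.leftMarginal a (Pi.single ξ 1) a' α *
        update P.rightMarginal b (Pi.single η 1) b' β) := by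
  simp only [pairDist]
  rw [sum_comm]
  refine sum_congr rfl fun ξ _ => ?_
  rw [sum_comm]
  refine sum_congr rfl fun η _ => ?_
  rw [← mul_sum,
    sum_filter_mem_atom_mul (fun x => ∏ i, update P.leftMarginal a (Pi.single ξ 1) i (x i))
      (fun y => ∏ j, update P.rightMarginal b (Pi.single η 1) j (y j)),
    Fintype.sum_filter_apply_eq_of_sum_eq_one (sum_update_single_eq_one P.sum_leftMarginal a ξ),
    Fintype.sum_filter_apply_eq_of_sum_eq_one (sum_update_single_eq_one P.sum_rightMarginal b η)]

theorem sum_pairDist_atom_self (a : Fin N) (α : U a) (b : Fin M) (β : V b) :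
    ∑ z with z ∈ atom a α b β, P.pairDist a b z = P.val a b α β := by
  simp [sum_pairDist_atom, Pi.single_apply]

theorem sum_pairDist_atom_of_ne {a a' : Fin N} (α : U a') {b b' : Fin M} (β : V b')
    (h : a' ≠ a ∨ b' ≠ b) :
    ∑ z with z ∈ atom a' α b' β, P.pairDist a b z
      = P.leftMarginal a' α * P.rightMarginal b' β := by
  rw [sum_pairDist_atom]
  rcases eq_or_ne a' a with rfl | ha
  · simp [update_of_ne (h.resolve_left (not_not_intro rfl)), Pi.single_apply, ← sum_mul,
      sum_val_right]
  rcases eq_or_ne b' b with rfl | hb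
  · simp only [update_of_ne ha, update_self, Pi.single_apply, mul_ite, mul_one, mul_zero,
      sum_ite_eq, mem_univ, if_true]
    rw [← sum_mul, sum_val_left, mul_comm]
  · simp [update_of_ne ha, update_of_ne hb, ← sum_mul, P.normalized]

theorem sum_quasiDist_atom (a : Fin N) (α : U a) (b : Fin M) (β : V b) :
    ∑ z with z ∈ atom a α b β, P.quasiDist z = P.val a b α β := by
  have hcorrection : ∀ a' b', ∑ z with z ∈ atom a α b β, (P.pairDist a' b' z - P.productDist z)
      = if a' = a ∧ b' = b then P.val a b α β - P.leftMarginal a α * P.rightMarginal b β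
        else 0 := by
    intro a' b'
    rw [sum_sub_distrib, sum_productDist_atom]
    split_ifs with h
    · obtain ⟨rfl, rfl⟩ := h
      rw [sum_pairDist_atom_self]
    · rw [sum_pairDist_atom_of_ne _ _ _ ((not_and_or.mp h).imp Ne.symm Ne.symm), sub_self]
  simp only [quasiDist, sum_add_distrib, sum_productDist_atom]
  rw [sum_comm]
  simp only [sum_comm (s := univ.filter _), hcorrection]
  simp [ite_and]

theorem sum_val_eq_sum_quasiDist_iUnion {ι : Type*} [Fintype ι] (A : ι → Fin N)
    (al : ∀ i, U (A i)) (B : ι → Fin M) (be : ∀ i, V (B i))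
    (hd : Pairwise (Disjoint on fun i => atom (A i) (al i) (B i) (be i))) :
    ∑ i, P.val (A i) (B i) (al i) (be i)
      = ∑ z with z ∈ ⋃ i, atom (A i) (al i) (B i) (be i), P.quasiDist z := by
  rw [sum_filter_mem_iUnion _ hd]
  exact sum_congr rfl fun i _ => (P.sum_quasiDist_atom _ _ _ _).symm

end PRState

end Box

end

theorem statement4_general {N M : ℕ} (hN : 0 < N) (hM : 0 < M)
    (U : Fin N → Type) (V : Fin M → Type)
    [∀ a, Fintype (U a)] [∀ b, Fintype (V b)]
    (P : Box.PRState U V) (n m : ℕ)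
    (A : Fin n → Fin N) (al : ∀ i, U (A i)) (B : Fin n → Fin M) (be : ∀ i, V (B i))
    (C : Fin m → Fin N) (ga : ∀ j, U (C j)) (D : Fin m → Fin M) (de : ∀ j, V (D j))
    (hd₁ : ∀ i j, i ≠ j →
      Disjoint (Box.atom (A i) (al i) (B i) (be i)) (Box.atom (A j) (al j) (B j) (be j)))
    (hd₂ : ∀ i j, i ≠ j →
      Disjoint (Box.atom (C i) (ga i) (D i) (de i)) (Box.atom (C j) (ga j) (D j) (de j)))
    (heq : ⋃ i, Box.atom (A i) (al i) (B i) (be i) =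
           ⋃ j, Box.atom (C j) (ga j) (D j) (de j)) :
    ∑ i, P.val (A i) (B i) (al i) (be i) = ∑ j, P.val (C j) (D j) (ga j) (de j) := by
  have : NeZero N := ⟨hN.ne'⟩
  have : NeZero M := ⟨hM.ne'⟩
  rw [P.sum_val_eq_sum_quasiDist_iUnion A al B be hd₁, heq,
    P.sum_val_eq_sum_quasiDist_iUnion C ga D de hd₂]

theorem statement4 {N M : ℕ} (hN : 0 < N) (hM : 0 < M)
    (U : Fin N → Type) (V : Fin M → Type)
    [∀ a, Fintype (U a)] [∀ b, Fintype (V b)]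
    (hU : ∀ a, 2 ≤ Fintype.card (U a)) (hV : ∀ b, 2 ≤ Fintype.card (V b))
    (P : Box.PRState U V) (n m : ℕ)
    (A : Fin n → Fin N) (al : ∀ i, U (A i)) (B : Fin n → Fin M) (be : ∀ i, V (B i))
    (C : Fin m → Fin N) (ga : ∀ j, U (C j)) (D : Fin m → Fin M) (de : ∀ j, V (D j))
    (hd₁ : ∀ i j, i ≠ j →
      Disjoint (Box.atom (A i) (al i) (B i) (be i)) (Box.atom (A j) (al j) (B j) (be j)))
    (hne₁ : ∀ i j, i ≠ j →
      Box.atom (A i) (al i) (B i) (be i) ≠ Box.atom (A j) (al j) (B j) (be j))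
    (hd₂ : ∀ i j, i ≠ j →
      Disjoint (Box.atom (C i) (ga i) (D i) (de i)) (Box.atom (C j) (ga j) (D j) (de j)))
    (hne₂ : ∀ i j, i ≠ j →
      Box.atom (C i) (ga i) (D i) (de i) ≠ Box.atom (C j) (ga j) (D j) (de j))
    (heq : ⋃ i, Box.atom (A i) (al i) (B i) (be i) =
           ⋃ j, Box.atom (C j) (ga j) (D j) (de j)) :
    ∑ i, P.val (A i) (B i) (al i) (be i) = ∑ j, P.val (C j) (D j) (ga j) (de j) :=
  statement4_general hN hM U V P n m A al B be C ga D de hd₁ hd₂ heq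
end

section
/- For every PR-state P there exists a unique state ρ_P on ℒ such that ρ_P([aα,bβ]) = P(αβ|ab) for every atom [aα,bβ]. -/
section Aux

set_option linter.unusedSectionVars false

namespace BoxAux

open Set

variable {K : ℕ} {W : Fin K → Type}

/-- single-coordinate cylinder -/
def cyl (b : Fin K) (Q : Set (W b)) : Set (∀ j, W j) := {y | y b ∈ Q}

lemma mem_cyl {b : Fin K} {Q : Set (W b)} {y : ∀ j, W j} : y ∈ cyl b Q ↔ y b ∈ Q := Iff.rfl

lemma cyl_empty_iff (hW : ∀ j, Nonempty (W j)) {b : Fin K} {Q : Set (W b)} :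
    cyl b Q = ∅ ↔ Q = ∅ := by
  constructor
  · intro h
    ext β
    simp only [mem_empty_iff_false, iff_false]
    intro hβ
    have : Function.update (fun j => Classical.choice (hW j)) b β ∈ cyl b Q := by
      simp [mem_cyl, hβ]
    simp [h] at this
  · intro h; ext y; simp [mem_cyl, h]

lemma cyl_eq (hW : ∀ j, Nonempty (W j)) {b b' : Fin K} {Q : Set (W b)} {Q' : Set (W b')}
    (h : cyl b Q = cyl b' Q') :
    (∃ h : b = b', Q' = h ▸ Q) ∨ (Q = ∅ ∧ Q' = ∅) ∨ (Q = univ ∧ Q' = univ) := by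
  classical
  have y₀ : ∀ j, W j := fun j => Classical.choice (hW j)
  by_cases hbb : b = b'
  · subst hbb
    left
    refine ⟨rfl, ?_⟩
    ext β
    have := Set.ext_iff.1 h (Function.update y₀ b β)
    simpa [mem_cyl] using this.symm
  · right
    by_cases hQ : Q = ∅
    · subst hQ
      have h0 : cyl b (∅ : Set (W b)) = (∅ : Set (∀ j, W j)) := (cyl_empty_iff hW).2 rfl
      exact Or.inl ⟨rfl, (cyl_empty_iff hW).1 (h ▸ h0 : cyl b' Q' = ∅)⟩
    · -- Q nonempty; show both univ
      obtain ⟨β, hβ⟩ := Set.nonempty_iff_ne_empty.2 hQ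
      have hQ'univ : Q' = univ := by
        ext β'
        simp only [mem_univ, iff_true]
        have hy : Function.update (Function.update y₀ b β) b' β' ∈ cyl b Q := by
          simp [mem_cyl, Function.update_of_ne hbb, hβ]
        rw [h] at hy
        simpa [mem_cyl] using hy
      have hQuniv : Q = univ := by
        ext β''
        simp only [mem_univ, iff_true]
        have hβ' : (Classical.choice (hW b') : W b') ∈ Q' := by simp [hQ'univ]
        have hy : Function.update (Function.update y₀ b' (Classical.choice (hW b'))) b β'' ∈ cyl b' Q' := by
          simp [mem_cyl, Function.update_of_ne (Ne.symm hbb), hβ']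
        rw [← h] at hy
        simpa [mem_cyl] using hy
      exact Or.inr ⟨hQuniv, hQ'univ⟩

lemma cyl_disjoint (hW : ∀ j, Nonempty (W j)) {b b' : Fin K} {Q : Set (W b)} {Q' : Set (W b')}
    (hbb : b ≠ b') (hQ : Q.Nonempty) (hQ' : Q'.Nonempty) :
    ¬ Disjoint (cyl b Q) (cyl b' Q') := by
  classical
  obtain ⟨β, hβ⟩ := hQ
  obtain ⟨β', hβ'⟩ := hQ'
  intro hd
  have hy : Function.update (Function.update (fun j => Classical.choice (hW j)) b β) b' β' ∈ cyl b Q ∩ cyl b' Q' := by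
    constructor
    · simp [mem_cyl, Function.update_of_ne hbb, hβ]
    · simp [mem_cyl, hβ']
  exact (hd.inter_eq ▸ hy : _)

end BoxAux

namespace Box

open Set BoxAux

open scoped Classical

variable {N M : ℕ} {U : Fin N → Type} {V : Fin M → Type}
  [∀ a, Fintype (U a)] [∀ b, Fintype (V b)]

/-- left form: `(x,y) ∈ s ↔ y_{b(x_a)} ∈ Q(x_a)`. -/
def leftSet (a : Fin N) (b : U a → Fin M) (Q : ∀ α, Set (V (b α))) :
    Set ((∀ i, U i) × (∀ j, V j)) :=
  {p | p.2 (b (p.1 a)) ∈ Q (p.1 a)}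

lemma mem_leftSet {a : Fin N} {b : U a → Fin M} {Q : ∀ α, Set (V (b α))}
    {p : (∀ i, U i) × (∀ j, V j)} :
    p ∈ leftSet a b Q ↔ p.2 ∈ cyl (b (p.1 a)) (Q (p.1 a)) := Iff.rfl

def rightSet (b : Fin M) (a : V b → Fin N) (Q : ∀ β, Set (U (a β))) :
    Set ((∀ i, U i) × (∀ j, V j)) :=
  Prod.swap ⁻¹' (leftSet (U := V) (V := U) b a Q)

lemma mem_rightSet {b : Fin M} {a : V b → Fin N} {Q : ∀ β, Set (U (a β))}
    {p : (∀ i, U i) × (∀ j, V j)} :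
    p ∈ rightSet b a Q ↔ p.1 ∈ cyl (a (p.2 b)) (Q (p.2 b)) := Iff.rfl

noncomputable def PRState.swap (P : PRState U V) : PRState V U where
  val b a β α := P.val a b α β
  nonneg b a β α := P.nonneg a b α β
  normalized b a := by rw [Finset.sum_comm]; exact P.normalized a b
  nonsig_left b c a α := P.nonsig_right a b c α
  nonsig_right b a c β := P.nonsig_left a c b β

variable (P : PRState U V)

noncomputable def cylVal (a : Fin N) (α : U a) (b : Fin M) (Q : Set (V b)) : ℝ :=
  ∑ β, Q.indicator (P.val a b α) β

noncomputable def leftVal (a : Fin N) (b : U a → Fin M) (Q : ∀ α, Set (V (b α))) : ℝ :=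
  ∑ α, cylVal P a α (b α) (Q α)

lemma cylVal_nonneg (a : Fin N) (α : U a) (b : Fin M) (Q : Set (V b)) :
    0 ≤ cylVal P a α b Q :=
  Finset.sum_nonneg fun β _ => Set.indicator_nonneg (fun β _ => P.nonneg a b α β) β

lemma cylVal_le (a : Fin N) (α : U a) (b : Fin M) (Q : Set (V b)) :
    cylVal P a α b Q ≤ ∑ β, P.val a b α β :=
  Finset.sum_le_sum fun β _ => Set.indicator_le_self' (fun β _ => P.nonneg a b α β) β

lemma cylVal_empty (a : Fin N) (α : U a) (b : Fin M) :
    cylVal P a α b (∅ : Set (V b)) = 0 := by simp [cylVal]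

lemma cylVal_univ (a : Fin N) (α : U a) (b : Fin M) :
    cylVal P a α b (univ : Set (V b)) = ∑ β, P.val a b α β := by simp [cylVal]

lemma cylVal_congr (hV : ∀ j, Nonempty (V j)) {a : Fin N} (α : U a) {b b' : Fin M}
    {Q : Set (V b)} {Q' : Set (V b')} (h : cyl b Q = cyl b' Q') :
    cylVal P a α b Q = cylVal P a α b' Q' := by
  rcases cyl_eq hV h with ⟨rfl, rfl⟩ | ⟨h1, h2⟩ | ⟨h1, h2⟩
  · rfl
  · rw [h1, h2, cylVal_empty, cylVal_empty]
  · rw [h1, h2, cylVal_univ, cylVal_univ]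
    exact P.nonsig_right a b b' α

lemma cylVal_union (a : Fin N) (α : U a) (b : Fin M) {Q Q' : Set (V b)}
    (h : Disjoint Q Q') :
    cylVal P a α b (Q ∪ Q') = cylVal P a α b Q + cylVal P a α b Q' := by
  rw [cylVal, cylVal, cylVal, ← Finset.sum_add_distrib]
  exact Finset.sum_congr rfl fun β _ => by
    rw [Set.indicator_union_of_disjoint h]

lemma cylVal_sum_swap (a a' : Fin N) (b : Fin M) (Q : Set (V b)) :
    ∑ α, cylVal P a α b Q = ∑ α', cylVal P a' α' b Q := by
  unfold cylVal
  rw [Finset.sum_comm]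
  conv_rhs => rw [Finset.sum_comm]
  refine Finset.sum_congr rfl fun β _ => ?_
  by_cases hβ : β ∈ Q
  · simp only [Set.indicator_of_mem hβ]
    exact P.nonsig_left a a' b β
  · simp [Set.indicator_of_notMem hβ]


lemma leftVal_welldef (hU : ∀ i, Nonempty (U i)) (hV : ∀ j, Nonempty (V j))
    {a a' : Fin N} {b : U a → Fin M} {b' : U a' → Fin M}
    {Q : ∀ α, Set (V (b α))} {Q' : ∀ α, Set (V (b' α))}
    (h : leftSet a b Q = leftSet a' b' Q') :
    leftVal P a b Q = leftVal P a' b' Q' := by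
  classical
  have x₀ : ∀ i, U i := fun i => Classical.choice (hU i)
  have hmem : ∀ (x : ∀ i, U i) (y : ∀ j, V j),
      y ∈ cyl (b (x a)) (Q (x a)) ↔ y ∈ cyl (b' (x a')) (Q' (x a')) :=
    fun x y => Set.ext_iff.1 h (x, y)
  by_cases haa : a = a'
  · subst haa
    unfold leftVal
    refine Finset.sum_congr rfl fun α _ => cylVal_congr P hV α ?_
    ext y
    have e : Function.update x₀ a α a = α := Function.update_self a α x₀
    have := hmem (Function.update x₀ a α) y
    rw [e] at this
    exact this
  · have α'₀ : U a' := Classical.choice (hU a')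
    have hfib : ∀ α : U a, cyl (b α) (Q α) = cyl (b' α'₀) (Q' α'₀) := by
      intro α
      ext y
      have e1 : Function.update (Function.update x₀ a' α'₀) a α a = α :=
        Function.update_self a α _
      have e2 : Function.update (Function.update x₀ a' α'₀) a α a' = α'₀ := by
        rw [Function.update_of_ne (Ne.symm haa), Function.update_self]
      have := hmem (Function.update (Function.update x₀ a' α'₀) a α) y
      rw [e1, e2] at this
      exact this
    have hfib' : ∀ α' : U a', cyl (b' α') (Q' α') = cyl (b' α'₀) (Q' α'₀) := by
      intro α'
      ext y
      have e1 : Function.update x₀ a' α' a = x₀ a := by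
        rw [Function.update_of_ne haa]
      have e2 : Function.update x₀ a' α' a' = α' := Function.update_self a' α' x₀
      have := hmem (Function.update x₀ a' α') y
      rw [e1, e2] at this
      rw [← this]
      exact Set.ext_iff.1 (hfib (x₀ a)) y
    calc leftVal P a b Q
        = ∑ α, cylVal P a α (b' α'₀) (Q' α'₀) :=
          Finset.sum_congr rfl fun α _ => cylVal_congr P hV α (hfib α)
      _ = ∑ α', cylVal P a' α' (b' α'₀) (Q' α'₀) := cylVal_sum_swap P a a' _ _
      _ = leftVal P a' b' Q' :=
          Finset.sum_congr rfl fun α' _ => (cylVal_congr P hV α' (hfib' α')).symm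

lemma leftVal_as_table (hV : ∀ j, Nonempty (V j)) (x₀ : ∀ i, U i) (y₀ : ∀ j, V j)
    {s : Set ((∀ i, U i) × (∀ j, V j))}
    {a : Fin N} {b : U a → Fin M} {Q : ∀ α, Set (V (b α))}
    (hs : s = leftSet a b Q) (c : Fin M)
    (hdep : ∀ (x : ∀ i, U i) (y : ∀ j, V j),
      (x, Function.update y₀ c (y c)) ∈ s ↔ (x, y) ∈ s) :
    leftVal P a b Q = ∑ α, ∑ β,
      (if (Function.update x₀ a α, Function.update y₀ c β) ∈ s
        then P.val a c α β else 0) := by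
  classical
  unfold leftVal
  refine Finset.sum_congr rfl fun α _ => ?_
  have hc : cyl (b α) (Q α) =
      cyl c {β | (Function.update x₀ a α, Function.update y₀ c β) ∈ s} := by
    ext y
    have e : Function.update x₀ a α a = α := Function.update_self a α x₀
    have h1 : y ∈ cyl (b α) (Q α) ↔ (Function.update x₀ a α, y) ∈ s := by
      rw [hs]
      change _ ↔ y ∈ cyl (b (Function.update x₀ a α a)) (Q (Function.update x₀ a α a))
      rw [e]
    have h2 : y ∈ cyl c {β | (Function.update x₀ a α, Function.update y₀ c β) ∈ s}
        ↔ (Function.update x₀ a α, Function.update y₀ c (y c)) ∈ s := Iff.rfl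
    rw [h1, h2, hdep]
  rw [cylVal_congr P hV α hc]
  unfold cylVal
  refine Finset.sum_congr rfl fun β _ => ?_
  by_cases hβ : (Function.update x₀ a α, Function.update y₀ c β) ∈ s
  · rw [Set.indicator_of_mem
      (show β ∈ {β | (Function.update x₀ a α, Function.update y₀ c β) ∈ s} from hβ), if_pos hβ]
  · rw [Set.indicator_of_notMem
      (show β ∉ {β | (Function.update x₀ a α, Function.update y₀ c β) ∈ s} from hβ), if_neg hβ]

lemma leftVal_eq_rightVal (hU : ∀ i, Nonempty (U i)) (hV : ∀ j, Nonempty (V j))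
    {s : Set ((∀ i, U i) × (∀ j, V j))}
    {a : Fin N} {b : U a → Fin M} {Q : ∀ α, Set (V (b α))}
    {c : Fin M} {d : V c → Fin N} {R : ∀ β, Set (U (d β))}
    (hl : s = leftSet a b Q)
    (hr : Prod.swap ⁻¹' s = leftSet (U := V) (V := U) c d R) :
    leftVal P a b Q = leftVal P.swap c d R := by
  classical
  have x₀ : ∀ i, U i := fun i => Classical.choice (hU i)
  have y₀ : ∀ j, V j := fun j => Classical.choice (hV j)
  have hdepA : ∀ (x : ∀ i, U i) (y : ∀ j, V j),
      (x, Function.update y₀ c (y c)) ∈ s ↔ (x, y) ∈ s := by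
    intro x y
    have h1 : ∀ y' : ∀ j, V j, (x, y') ∈ s ↔ (y', x) ∈ Prod.swap ⁻¹' s := fun y' => Iff.rfl
    rw [h1, h1, hr]
    change x ∈ cyl (d (Function.update y₀ c (y c) c)) (R (Function.update y₀ c (y c) c)) ↔
      x ∈ cyl (d (y c)) (R (y c))
    rw [Function.update_self]
  have hdepB : ∀ (y : ∀ j, V j) (x : ∀ i, U i),
      (y, Function.update x₀ a (x a)) ∈ Prod.swap ⁻¹' s ↔ (y, x) ∈ Prod.swap ⁻¹' s := by
    intro y x
    have h1 : ∀ x' : ∀ i, U i, (y, x') ∈ Prod.swap ⁻¹' s ↔ (x', y) ∈ s := fun x' => Iff.rfl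
    rw [h1, h1, hl]
    change y ∈ cyl (b (Function.update x₀ a (x a) a)) (Q (Function.update x₀ a (x a) a)) ↔
      y ∈ cyl (b (x a)) (Q (x a))
    rw [Function.update_self]
  have hA := leftVal_as_table P hV x₀ y₀ hl c hdepA
  have hB := leftVal_as_table P.swap hU y₀ x₀ hr a hdepB
  rw [hA, hB, Finset.sum_comm]
  rfl

/-- packaged data of a left representation -/
def LData (U : Fin N → Type) (V : Fin M → Type) : Type :=
  Σ (a : Fin N), Σ (b : U a → Fin M), ∀ α, Set (V (b α))

noncomputable def rho (s : Set ((∀ i, U i) × (∀ j, V j))) : ℝ :=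
  if h : ∃ r : LData U V, s = leftSet r.1 r.2.1 r.2.2 then
    leftVal P h.choose.1 h.choose.2.1 h.choose.2.2
  else if h' : ∃ r : LData V U,
      Prod.swap ⁻¹' s = leftSet (U := V) (V := U) r.1 r.2.1 r.2.2 then
    leftVal P.swap h'.choose.1 h'.choose.2.1 h'.choose.2.2
  else 0

lemma rho_left (hU : ∀ i, Nonempty (U i)) (hV : ∀ j, Nonempty (V j))
    {s : Set ((∀ i, U i) × (∀ j, V j))}
    {a : Fin N} {b : U a → Fin M} {Q : ∀ α, Set (V (b α))}
    (hs : s = leftSet a b Q) : rho P s = leftVal P a b Q := by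
  have hex : ∃ r : LData U V, s = leftSet r.1 r.2.1 r.2.2 := ⟨⟨a, b, Q⟩, hs⟩
  rw [rho, dif_pos hex]
  exact leftVal_welldef P hU hV (hex.choose_spec.symm.trans hs)

lemma swap_preimage_rightSet {c : Fin M} {d : V c → Fin N} {R : ∀ β, Set (U (d β))} :
    Prod.swap ⁻¹' (rightSet c d R) = leftSet (U := V) (V := U) c d R := by
  rw [rightSet, Set.preimage_preimage]
  simp

lemma rho_right (hU : ∀ i, Nonempty (U i)) (hV : ∀ j, Nonempty (V j))
    {s : Set ((∀ i, U i) × (∀ j, V j))}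
    {c : Fin M} {d : V c → Fin N} {R : ∀ β, Set (U (d β))}
    (hs : s = rightSet c d R) : rho P s = leftVal P.swap c d R := by
  have hr : Prod.swap ⁻¹' s = leftSet (U := V) (V := U) c d R := by
    rw [hs]; exact swap_preimage_rightSet
  rw [rho]
  split_ifs with h1 h2
  · exact leftVal_eq_rightVal P hU hV h1.choose_spec hr
  · exact leftVal_welldef P.swap hV hU (h2.choose_spec.symm.trans hr)
  · exact absurd ⟨⟨c, d, R⟩, hr⟩ h2


lemma mem_leftSet' {a : Fin N} {b : U a → Fin M} {Q : ∀ α, Set (V (b α))}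
    {x : ∀ i, U i} {y : ∀ j, V j} :
    (x, y) ∈ leftSet a b Q ↔ y (b (x a)) ∈ Q (x a) := Iff.rfl

lemma mem_rightSet' {c : Fin M} {d : V c → Fin N} {R : ∀ β, Set (U (d β))}
    {x : ∀ i, U i} {y : ∀ j, V j} :
    (x, y) ∈ rightSet c d R ↔ x (d (y c)) ∈ R (y c) := Iff.rfl

lemma mem_leftSet_of {a : Fin N} {b : U a → Fin M} {Q : ∀ α, Set (V (b α))}
    {x : ∀ i, U i} {y : ∀ j, V j} (α : U a) (hx : x a = α) (hy : y (b α) ∈ Q α) :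
    (x, y) ∈ leftSet a b Q := by subst hx; exact hy

lemma mem_rightSet_of {c : Fin M} {d : V c → Fin N} {R : ∀ β, Set (U (d β))}
    {x : ∀ i, U i} {y : ∀ j, V j} (β : V c) (hy : y c = β) (hx : x (d β) ∈ R β) :
    (x, y) ∈ rightSet c d R := by subst hy; exact hx

lemma swap_swap (s : Set ((∀ i, U i) × (∀ j, V j))) :
    Prod.swap ⁻¹' (Prod.swap ⁻¹' s) = s := by
  rw [Set.preimage_preimage]; simp

lemma swap_preimage_inj {s t : Set ((∀ i, U i) × (∀ j, V j))}
    (h : Prod.swap ⁻¹' s = Prod.swap ⁻¹' t) : s = t := by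
  rw [← swap_swap s, ← swap_swap t, h]

/-- union of two fiberwise-disjoint cylinders is a cylinder, with additive values -/
lemma cyl_add (hV : ∀ j, Nonempty (V j)) {b b' : Fin M}
    {Q : Set (V b)} {Q' : Set (V b')} (hd : Disjoint (cyl b Q) (cyl b' Q')) :
    ∃ (c : Fin M) (R : Set (V c)), cyl c R = cyl b Q ∪ cyl b' Q' ∧
      ∀ (a : Fin N) (α : U a), cylVal P a α c R = cylVal P a α b Q + cylVal P a α b' Q' := by
  classical
  by_cases hbb : b = b'
  · subst hbb
    have hQQ' : Disjoint Q Q' := by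
      rw [Set.disjoint_left]
      intro β hβ hβ'
      have hy : Function.update (fun j => Classical.choice (hV j)) b β ∈ cyl b Q := by
        simp [mem_cyl, hβ]
      have hy' : Function.update (fun j => Classical.choice (hV j)) b β ∈ cyl b Q' := by
        simp [mem_cyl, hβ']
      exact Set.disjoint_left.1 hd hy hy'
    refine ⟨b, Q ∪ Q', ?_, fun a α => cylVal_union P a α b hQQ'⟩
    ext y; simp [mem_cyl, Set.mem_union]
  · by_cases hQ : Q = ∅
    · refine ⟨b', Q', ?_, fun a α => by rw [hQ, cylVal_empty]; ring⟩
      rw [hQ, (cyl_empty_iff hV).2 rfl, Set.empty_union]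
    · have hQ' : Q' = ∅ := by
        by_contra hc
        exact cyl_disjoint hV hbb (Set.nonempty_iff_ne_empty.2 hQ)
          (Set.nonempty_iff_ne_empty.2 hc) hd
      refine ⟨b, Q, ?_, fun a α => by rw [hQ', cylVal_empty]; ring⟩
      rw [hQ', (cyl_empty_iff hV).2 rfl, Set.union_empty]

lemma add_left (hU : ∀ i, Nonempty (U i)) (hV : ∀ j, Nonempty (V j))
    {a : Fin N} {b b' : U a → Fin M}
    {Q : ∀ α, Set (V (b α))} {Q' : ∀ α, Set (V (b' α))}
    (hd : Disjoint (leftSet a b Q) (leftSet a b' Q')) :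
    ∃ (c : U a → Fin M) (R : ∀ α, Set (V (c α))),
      leftSet a b Q ∪ leftSet a b' Q' = leftSet a c R ∧
      leftVal P a c R = leftVal P a b Q + leftVal P a b' Q' := by
  classical
  have x₀ : ∀ i, U i := fun i => Classical.choice (hU i)
  have hdα : ∀ α : U a, Disjoint (cyl (b α) (Q α)) (cyl (b' α) (Q' α)) := by
    intro α
    rw [Set.disjoint_left]
    intro y hy hy'
    exact Set.disjoint_left.1 hd
      (mem_leftSet_of (x := Function.update x₀ a α) α (Function.update_self a α x₀) hy)
      (mem_leftSet_of (x := Function.update x₀ a α) α (Function.update_self a α x₀) hy')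
  choose c R hcyl hval using fun α => cyl_add P hV (hdα α)
  refine ⟨c, R, ?_, ?_⟩
  · ext p
    rw [Set.mem_union, mem_leftSet, mem_leftSet, mem_leftSet, ← Set.mem_union,
      ← hcyl (p.1 a)]
  · unfold leftVal
    rw [← Finset.sum_add_distrib]
    exact Finset.sum_congr rfl fun α _ => hval α a α

lemma add_right (hU : ∀ i, Nonempty (U i)) (hV : ∀ j, Nonempty (V j))
    {c : Fin M} {d d' : V c → Fin N}
    {R : ∀ β, Set (U (d β))} {R' : ∀ β, Set (U (d' β))}
    (hd : Disjoint (rightSet c d R) (rightSet c d' R')) :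
    ∃ (e : V c → Fin N) (S : ∀ β, Set (U (e β))),
      rightSet c d R ∪ rightSet c d' R' = rightSet c e S ∧
      leftVal P.swap c e S = leftVal P.swap c d R + leftVal P.swap c d' R' := by
  have h1 : Disjoint (leftSet (U := V) (V := U) c d R)
      (leftSet (U := V) (V := U) c d' R') := by
    rw [← swap_preimage_rightSet, ← swap_preimage_rightSet]
    exact hd.preimage _
  obtain ⟨e, S, hs, hv⟩ := add_left P.swap hV hU h1
  refine ⟨e, S, ?_, hv⟩
  rw [rightSet, rightSet, rightSet, ← Set.preimage_union, hs]

lemma leftSet_const_coord {a : Fin N} {b : U a → Fin M} {Q : ∀ α, Set (V (b α))}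
    {c : Fin M} (h : ∀ α, Q α ≠ ∅ → b α = c) :
    ∃ R : U a → Set (V c), leftSet a b Q = leftSet a (fun _ => c) R := by
  classical
  refine ⟨fun α => if h' : b α = c then h' ▸ Q α else ∅, ?_⟩
  ext p
  by_cases h' : b (p.1 a) = c
  · rw [mem_leftSet, mem_leftSet]
    rw [dif_pos h']
    subst h'
    exact Iff.rfl
  · have hQ : Q (p.1 a) = ∅ := by
      by_contra hc
      exact h' (h _ hc)
    rw [mem_leftSet, mem_leftSet, dif_neg h', hQ]
    simp [mem_cyl]

lemma leftSet_const_eq_rightSet {a : Fin N} {c : Fin M} (R : U a → Set (V c)) :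
    leftSet a (fun _ => c) R = rightSet c (fun _ => a) (fun β => {α | β ∈ R α}) := rfl

lemma rightSet_const_eq_leftSet {a : Fin N} {c : Fin M} (S : V c → Set (U a)) :
    rightSet c (fun _ => a) S = leftSet a (fun _ => c) (fun α => {β | α ∈ S β}) := rfl

/-- coordinates of nonempty fibers of disjoint left sets at distinct inputs agree -/
lemma cross (hU : ∀ i, Nonempty (U i)) (hV : ∀ j, Nonempty (V j))
    {a a' : Fin N} {b : U a → Fin M} {b' : U a' → Fin M}
    {Q : ∀ α, Set (V (b α))} {Q' : ∀ α, Set (V (b' α))} (haa : a ≠ a')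
    (hd : Disjoint (leftSet a b Q) (leftSet a' b' Q'))
    {α : U a} {α' : U a'} (h1 : Q α ≠ ∅) (h2 : Q' α' ≠ ∅) : b α = b' α' := by
  classical
  by_contra hbb
  obtain ⟨β, hβ⟩ := Set.nonempty_iff_ne_empty.2 h1
  obtain ⟨β', hβ'⟩ := Set.nonempty_iff_ne_empty.2 h2
  have x₀ : ∀ i, U i := fun i => Classical.choice (hU i)
  have y₀ : ∀ j, V j := fun j => Classical.choice (hV j)
  set x := Function.update (Function.update x₀ a' α') a α with hx
  set y := Function.update (Function.update y₀ (b α) β) (b' α') β' with hy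
  have hxa : x a = α := Function.update_self a α _
  have hxa' : x a' = α' := by
    rw [hx, Function.update_of_ne (Ne.symm haa), Function.update_self]
  have hyb : y (b α) = β := by
    rw [hy, Function.update_of_ne hbb, Function.update_self]
  have hyb' : y (b' α') = β' := Function.update_self _ β' _
  exact Set.disjoint_left.1 hd
    (mem_leftSet_of α hxa (hyb ▸ hβ))
    (mem_leftSet_of α' hxa' (hyb' ▸ hβ'))


def InC (s : Set ((∀ i, U i) × (∀ j, V j))) : Prop :=
  (∃ r : LData U V, s = leftSet r.1 r.2.1 r.2.2) ∨
  (∃ r : LData V U, s = rightSet r.1 r.2.1 r.2.2)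

lemma inC_left {s : Set ((∀ i, U i) × (∀ j, V j))} {a : Fin N} {b : U a → Fin M}
    {Q : ∀ α, Set (V (b α))} (hs : s = leftSet a b Q) : InC s := Or.inl ⟨⟨a, b, Q⟩, hs⟩

lemma inC_right {s : Set ((∀ i, U i) × (∀ j, V j))} {c : Fin M} {d : V c → Fin N}
    {R : ∀ β, Set (U (d β))} (hs : s = rightSet c d R) : InC s := Or.inr ⟨⟨c, d, R⟩, hs⟩

lemma empty_rep (hN : 0 < N) (hM : 0 < M) :
    (∅ : Set ((∀ i, U i) × (∀ j, V j))) =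
      leftSet ⟨0, hN⟩ (fun _ => ⟨0, hM⟩) (fun _ => (∅ : Set (V ⟨0, hM⟩))) := by
  ext p; simp [leftSet]

lemma rho_empty (hN : 0 < N) (hM : 0 < M)
    (hU : ∀ i, Nonempty (U i)) (hV : ∀ j, Nonempty (V j)) :
    rho P (∅ : Set ((∀ i, U i) × (∀ j, V j))) = 0 := by
  rw [rho_left P hU hV (empty_rep hN hM)]
  simp [leftVal, cylVal_empty]

lemma master_LL (hU : ∀ i, Nonempty (U i)) (hV : ∀ j, Nonempty (V j))
    {a a' : Fin N} {b : U a → Fin M} {b' : U a' → Fin M}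
    {Q : ∀ α, Set (V (b α))} {Q' : ∀ α, Set (V (b' α))}
    (hd : Disjoint (leftSet a b Q) (leftSet a' b' Q')) :
    InC (leftSet a b Q ∪ leftSet a' b' Q') ∧
      rho P (leftSet a b Q ∪ leftSet a' b' Q') =
        rho P (leftSet a b Q) + rho P (leftSet a' b' Q') := by
  classical
  have hN : 0 < N := a.pos
  have hM : 0 < M := (b (Classical.choice (hU a))).pos
  by_cases haa : a = a'
  · subst haa
    obtain ⟨c, R, hu, hv⟩ := add_left P hU hV hd
    refine ⟨inC_left hu, ?_⟩
    rw [rho_left P hU hV hu, rho_left P hU hV rfl, rho_left P hU hV rfl, hv]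
  · by_cases hp0 : leftSet a b Q = ∅
    · rw [hp0, Set.empty_union, rho_empty P hN hM hU hV, zero_add]
      exact ⟨inC_left rfl, rfl⟩
    · by_cases hq0 : leftSet a' b' Q' = ∅
      · rw [hq0, Set.union_empty, rho_empty P hN hM hU hV, add_zero]
        exact ⟨inC_left rfl, rfl⟩
      · obtain ⟨⟨x₁, y₁⟩, hp₁⟩ := Set.nonempty_iff_ne_empty.2 hp0
        obtain ⟨⟨x₂, y₂⟩, hq₂⟩ := Set.nonempty_iff_ne_empty.2 hq0
        have hQ₁ : Q (x₁ a) ≠ ∅ := Set.nonempty_iff_ne_empty.1 ⟨_, hp₁⟩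
        have hQ₂ : Q' (x₂ a') ≠ ∅ := Set.nonempty_iff_ne_empty.1 ⟨_, hq₂⟩
        have hbc : ∀ α, Q α ≠ ∅ → b α = b' (x₂ a') :=
          fun α hα => cross hU hV haa hd hα hQ₂
        have hb'c : ∀ α', Q' α' ≠ ∅ → b' α' = b' (x₂ a') := by
          intro α' hα'
          have h1 := cross hU hV haa hd hQ₁ hα'
          have h2 := cross hU hV haa hd hQ₁ hQ₂
          exact h1.symm.trans h2
        obtain ⟨R, hR⟩ := leftSet_const_coord hbc
        obtain ⟨R', hR'⟩ := leftSet_const_coord hb'c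
        rw [leftSet_const_eq_rightSet] at hR hR'
        have hd2 : Disjoint (rightSet (b' (x₂ a')) (fun _ => a) fun β => {α | β ∈ R α})
            (rightSet (b' (x₂ a')) (fun _ => a') fun β => {α | β ∈ R' α}) := by
          rw [← hR, ← hR']; exact hd
        obtain ⟨e, S, hu, hv⟩ := add_right P hU hV hd2
        have huu : leftSet a b Q ∪ leftSet a' b' Q' = rightSet (b' (x₂ a')) e S := by
          rw [hR, hR', hu]
        refine ⟨inC_right huu, ?_⟩
        rw [rho_right P hU hV huu, rho_right P hU hV hR, rho_right P hU hV hR', hv]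

lemma master_RR (hU : ∀ i, Nonempty (U i)) (hV : ∀ j, Nonempty (V j))
    {c c' : Fin M} {d : V c → Fin N} {d' : V c' → Fin N}
    {R : ∀ β, Set (U (d β))} {R' : ∀ β, Set (U (d' β))}
    (hd : Disjoint (rightSet c d R) (rightSet c' d' R')) :
    InC (rightSet c d R ∪ rightSet c' d' R') ∧
      rho P (rightSet c d R ∪ rightSet c' d' R') =
        rho P (rightSet c d R) + rho P (rightSet c' d' R') := by
  classical
  have hM : 0 < M := c.pos
  have hN : 0 < N := (d (Classical.choice (hV c))).pos
  by_cases hcc : c = c'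
  · subst hcc
    obtain ⟨e, S, hu, hv⟩ := add_right P hU hV hd
    refine ⟨inC_right hu, ?_⟩
    rw [rho_right P hU hV hu, rho_right P hU hV rfl, rho_right P hU hV rfl, hv]
  · by_cases hp0 : rightSet c d R = ∅
    · rw [hp0, Set.empty_union, rho_empty P hN hM hU hV, zero_add]
      exact ⟨inC_right rfl, rfl⟩
    · by_cases hq0 : rightSet c' d' R' = ∅
      · rw [hq0, Set.union_empty, rho_empty P hN hM hU hV, add_zero]
        exact ⟨inC_right rfl, rfl⟩
      · -- work with the swapped sets
        have hdsw : Disjoint (leftSet (U := V) (V := U) c d R)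
            (leftSet (U := V) (V := U) c' d' R') := by
          rw [← swap_preimage_rightSet, ← swap_preimage_rightSet]
          exact hd.preimage _
        obtain ⟨⟨x₁, y₁⟩, hp₁⟩ := Set.nonempty_iff_ne_empty.2 hp0
        obtain ⟨⟨x₂, y₂⟩, hq₂⟩ := Set.nonempty_iff_ne_empty.2 hq0
        have hR₁ : R (y₁ c) ≠ ∅ := Set.nonempty_iff_ne_empty.1 ⟨_, hp₁⟩
        have hR₂ : R' (y₂ c') ≠ ∅ := Set.nonempty_iff_ne_empty.1 ⟨_, hq₂⟩
        have hbc : ∀ β, R β ≠ ∅ → d β = d' (y₂ c') :=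
          fun β hβ => cross hV hU hcc hdsw hβ hR₂
        have hb'c : ∀ β', R' β' ≠ ∅ → d' β' = d' (y₂ c') := by
          intro β' hβ'
          have h1 := cross hV hU hcc hdsw hR₁ hβ'
          have h2 := cross hV hU hcc hdsw hR₁ hR₂
          exact h1.symm.trans h2
        obtain ⟨S, hS⟩ := leftSet_const_coord hbc
        obtain ⟨S', hS'⟩ := leftSet_const_coord hb'c
        rw [leftSet_const_eq_rightSet] at hS hS'
        -- hS : leftSet (V,U) c d R = Prod.swap ⁻¹' (leftSet (d' (y₂ c')) (fun _ => c) _)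
        have hP : rightSet c d R =
            leftSet (d' (y₂ c')) (fun _ => c) (fun α => {β | α ∈ S β}) := by
          apply swap_preimage_inj
          rw [swap_preimage_rightSet, hS]; rfl
        have hQ : rightSet c' d' R' =
            leftSet (d' (y₂ c')) (fun _ => c') (fun α => {β | α ∈ S' β}) := by
          apply swap_preimage_inj
          rw [swap_preimage_rightSet, hS']; rfl
        have hd2 : Disjoint (leftSet (d' (y₂ c')) (fun _ => c) fun α => {β | α ∈ S β})
            (leftSet (d' (y₂ c')) (fun _ => c') fun α => {β | α ∈ S' β}) := by
          rw [← hP, ← hQ]; exact hd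
        obtain ⟨e, T, hu, hv⟩ := add_left P hU hV hd2
        have huu : rightSet c d R ∪ rightSet c' d' R' = leftSet (d' (y₂ c')) e T := by
          rw [hP, hQ, hu]
        refine ⟨inC_left huu, ?_⟩
        rw [rho_left P hU hV huu, rho_left P hU hV hP, rho_left P hU hV hQ, hv]

lemma master_LR (hU : ∀ i, Nonempty (U i)) (hV : ∀ j, Nonempty (V j))
    {a : Fin N} {b : U a → Fin M} {Q : ∀ α, Set (V (b α))}
    {c : Fin M} {d : V c → Fin N} {R : ∀ β, Set (U (d β))}
    (hd : Disjoint (leftSet a b Q) (rightSet c d R)) :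
    InC (leftSet a b Q ∪ rightSet c d R) ∧
      rho P (leftSet a b Q ∪ rightSet c d R) =
        rho P (leftSet a b Q) + rho P (rightSet c d R) := by
  classical
  have hN : 0 < N := a.pos
  have hM : 0 < M := c.pos
  have x₀ : ∀ i, U i := fun i => Classical.choice (hU i)
  have y₀ : ∀ j, V j := fun j => Classical.choice (hV j)
  by_cases h1 : ∀ α, Q α ≠ ∅ → b α = c
  · obtain ⟨S, hS⟩ := leftSet_const_coord h1
    rw [leftSet_const_eq_rightSet] at hS
    have hd2 : Disjoint (rightSet c (fun _ => a) fun β => {α | β ∈ S α})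
        (rightSet c d R) := by rw [← hS]; exact hd
    obtain ⟨e, T, hu, hv⟩ := add_right P hU hV hd2
    have huu : leftSet a b Q ∪ rightSet c d R = rightSet c e T := by rw [hS, hu]
    refine ⟨inC_right huu, ?_⟩
    rw [rho_right P hU hV huu, rho_right P hU hV hS, rho_right P hU hV rfl, hv]
  · push_neg at h1
    obtain ⟨α₀, hQα₀, hbα₀⟩ := h1
    by_cases h2 : ∀ β, R β ≠ ∅ → d β = a
    · obtain ⟨S, hS⟩ := leftSet_const_coord (U := V) (V := U) h2
      rw [leftSet_const_eq_rightSet] at hS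
      have hq : rightSet c d R = leftSet a (fun _ => c) (fun α => {β | α ∈ S β}) := by
        apply swap_preimage_inj
        rw [swap_preimage_rightSet, hS]; rfl
      have hd2 : Disjoint (leftSet a b Q)
          (leftSet a (fun _ => c) fun α => {β | α ∈ S β}) := by
        rw [← hq]; exact hd
      obtain ⟨e, T, hu, hv⟩ := add_left P hU hV hd2
      have huu : leftSet a b Q ∪ rightSet c d R = leftSet a e T := by rw [hq, hu]
      refine ⟨inC_left huu, ?_⟩
      rw [rho_left P hU hV huu, rho_left P hU hV rfl, rho_left P hU hV hq, hv]
    · exfalso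
      push_neg at h2
      obtain ⟨β₀, hRβ₀, hdβ₀⟩ := h2
      obtain ⟨β₁, hβ₁⟩ := hQα₀
      obtain ⟨α₁, hα₁⟩ := hRβ₀
      set x := Function.update (Function.update x₀ (d β₀) α₁) a α₀ with hx
      set y := Function.update (Function.update y₀ (b α₀) β₁) c β₀ with hy
      have hxa : x a = α₀ := Function.update_self a α₀ _
      have hxd : x (d β₀) = α₁ := by
        rw [hx, Function.update_of_ne hdβ₀, Function.update_self]
      have hyb : y (b α₀) = β₁ := by
        rw [hy, Function.update_of_ne hbα₀, Function.update_self]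
      have hyc : y c = β₀ := Function.update_self c β₀ _
      exact Set.disjoint_left.1 hd
        (mem_leftSet_of α₀ hxa (hyb ▸ hβ₁))
        (mem_rightSet_of β₀ hyc (hxd ▸ hα₁))

lemma master (hU : ∀ i, Nonempty (U i)) (hV : ∀ j, Nonempty (V j))
    {p q : Set ((∀ i, U i) × (∀ j, V j))}
    (hp : InC p) (hq : InC q) (hd : Disjoint p q) :
    InC (p ∪ q) ∧ rho P (p ∪ q) = rho P p + rho P q := by
  rcases hp with ⟨⟨a, b, Q⟩, rfl⟩ | ⟨⟨c, d, R⟩, rfl⟩ <;>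
    rcases hq with ⟨⟨a', b', Q'⟩, rfl⟩ | ⟨⟨c', d', R'⟩, rfl⟩
  · exact master_LL P hU hV hd
  · exact master_LR P hU hV hd
  · obtain ⟨h1, h2⟩ := master_LR P hU hV hd.symm
    rw [Set.union_comm] at h1 h2
    rw [h2]
    exact ⟨h1, add_comm _ _⟩
  · exact master_RR P hU hV hd


lemma rho_iUnion (hN : 0 < N) (hM : 0 < M)
    (hU : ∀ i, Nonempty (U i)) (hV : ∀ j, Nonempty (V j)) :
    ∀ (n : ℕ) (f : Fin n → Set ((∀ i, U i) × (∀ j, V j))),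
      (∀ i, InC (f i)) → (∀ i j, i ≠ j → Disjoint (f i) (f j)) →
      InC (⋃ i, f i) ∧ rho P (⋃ i, f i) = ∑ i, rho P (f i) := by
  intro n
  induction n with
  | zero =>
    intro f _ _
    rw [Set.iUnion_of_empty]
    exact ⟨inC_left (empty_rep hN hM), by simp [rho_empty P hN hM hU hV]⟩
  | succ n ih =>
    intro f hf hd
    have hsplit : ⋃ i, f i = (⋃ i : Fin n, f i.castSucc) ∪ f (Fin.last n) := by
      ext z
      simp only [Set.mem_iUnion, Set.mem_union]
      constructor
      · rintro ⟨i, hi⟩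
        rcases Fin.eq_castSucc_or_eq_last i with ⟨j, rfl⟩ | rfl
        · exact Or.inl ⟨j, hi⟩
        · exact Or.inr hi
      · rintro (⟨i, hi⟩ | h)
        · exact ⟨i.castSucc, hi⟩
        · exact ⟨Fin.last n, h⟩
    obtain ⟨h1, h2⟩ := ih (fun i => f i.castSucc) (fun i => hf _)
      (fun i j hij => hd _ _ (by simpa [Fin.castSucc_inj] using hij))
    have hdisj : Disjoint (⋃ i : Fin n, f i.castSucc) (f (Fin.last n)) := by
      rw [Set.disjoint_iUnion_left]
      exact fun i => hd _ _ (Fin.castSucc_lt_last i).ne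
    obtain ⟨h3, h4⟩ := master P hU hV h1 (hf (Fin.last n)) hdisj
    rw [hsplit]
    exact ⟨h3, by rw [h4, h2, Fin.sum_univ_castSucc]⟩

lemma atom_rep (a : Fin N) (α : U a) (b : Fin M) (β : V b) :
    Box.atom a α b β =
      leftSet a (fun _ => b) (fun α' => {β' | α' = α ∧ β' = β}) := rfl

lemma compl_leftSet {a : Fin N} {b : U a → Fin M} {Q : ∀ α, Set (V (b α))} :
    (leftSet a b Q)ᶜ = leftSet a b (fun α => (Q α)ᶜ) := rfl

lemma compl_rightSet {c : Fin M} {d : V c → Fin N} {R : ∀ β, Set (U (d β))} :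
    (rightSet c d R)ᶜ = rightSet c d (fun β => (R β)ᶜ) := rfl

include P in
lemma logic_inC (hN : 0 < N) (hM : 0 < M)
    (hU : ∀ i, Nonempty (U i)) (hV : ∀ j, Nonempty (V j))
    {s : Set ((∀ i, U i) × (∀ j, V j))} (hs : Logic U V s) : InC s := by
  induction hs with
  | empty => exact inC_left (empty_rep hN hM)
  | atom a α b β => exact inC_left (atom_rep a α b β)
  | compl s hs ih =>
    rcases ih with ⟨⟨a, b, Q⟩, rfl⟩ | ⟨⟨c, d, R⟩, rfl⟩
    · exact inC_left compl_leftSet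
    · exact inC_right compl_rightSet
  | iUnion n f hf hd ih =>
    exact (rho_iUnion P hN hM hU hV n f ih hd).1

lemma leftVal_nonneg (a : Fin N) (b : U a → Fin M) (Q : ∀ α, Set (V (b α))) :
    0 ≤ leftVal P a b Q :=
  Finset.sum_nonneg fun α _ => cylVal_nonneg P a α (b α) (Q α)

lemma sum_sum_val (a : Fin N) (b : U a → Fin M) (b₀ : Fin M) :
    ∑ α, ∑ β, P.val a (b α) α β = 1 := by
  have h : ∀ α : U a, ∑ β, P.val a (b α) α β = ∑ β, P.val a b₀ α β :=
    fun α => P.nonsig_right a (b α) b₀ α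
  rw [Finset.sum_congr rfl fun α _ => h α]
  exact P.normalized a b₀

lemma leftVal_le_one (hM : 0 < M) (a : Fin N) (b : U a → Fin M)
    (Q : ∀ α, Set (V (b α))) : leftVal P a b Q ≤ 1 := by
  calc leftVal P a b Q ≤ ∑ α, ∑ β, P.val a (b α) α β :=
        Finset.sum_le_sum fun α _ => cylVal_le P a α (b α) (Q α)
    _ = 1 := sum_sum_val P a b ⟨0, hM⟩

lemma univ_rep (hN : 0 < N) (hM : 0 < M) :
    (Set.univ : Set ((∀ i, U i) × (∀ j, V j))) =
      leftSet ⟨0, hN⟩ (fun _ => ⟨0, hM⟩) (fun _ => (Set.univ : Set (V ⟨0, hM⟩))) := by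
  ext p; simp [leftSet]

lemma rho_univ (hN : 0 < N) (hM : 0 < M)
    (hU : ∀ i, Nonempty (U i)) (hV : ∀ j, Nonempty (V j)) :
    rho P (Set.univ : Set ((∀ i, U i) × (∀ j, V j))) = 1 := by
  rw [rho_left P hU hV (univ_rep hN hM)]
  unfold leftVal
  rw [Finset.sum_congr rfl fun α _ => cylVal_univ P _ α _]
  exact sum_sum_val P _ _ ⟨0, hM⟩

lemma rho_nonneg_inC (hU : ∀ i, Nonempty (U i)) (hV : ∀ j, Nonempty (V j))
    {s : Set ((∀ i, U i) × (∀ j, V j))} (hs : InC s) : 0 ≤ rho P s := by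
  rcases hs with ⟨⟨a, b, Q⟩, rfl⟩ | ⟨⟨c, d, R⟩, rfl⟩
  · rw [rho_left P hU hV rfl]; exact leftVal_nonneg P a b Q
  · rw [rho_right P hU hV rfl]; exact leftVal_nonneg P.swap c d R

lemma rho_le_one_inC (hN : 0 < N) (hM : 0 < M)
    (hU : ∀ i, Nonempty (U i)) (hV : ∀ j, Nonempty (V j))
    {s : Set ((∀ i, U i) × (∀ j, V j))} (hs : InC s) : rho P s ≤ 1 := by
  rcases hs with ⟨⟨a, b, Q⟩, rfl⟩ | ⟨⟨c, d, R⟩, rfl⟩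
  · rw [rho_left P hU hV rfl]; exact leftVal_le_one P hM a b Q
  · rw [rho_right P hU hV rfl]; exact leftVal_le_one P.swap hN c d R

lemma rho_atom (hU : ∀ i, Nonempty (U i)) (hV : ∀ j, Nonempty (V j))
    (a : Fin N) (α : U a) (b : Fin M) (β : V b) :
    rho P (Box.atom a α b β) = P.val a b α β := by
  classical
  rw [rho_left P hU hV (atom_rep a α b β)]
  unfold leftVal cylVal
  have h : ∀ (α' : U a) (β' : V b),
      ({β' | α' = α ∧ β' = β} : Set (V b)).indicator (P.val a b α') β' =
        if α' = α then (if β' = β then P.val a b α' β' else 0) else 0 := by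
    intro α' β'
    rw [Set.indicator_apply]
    by_cases h1 : α' = α <;> by_cases h2 : β' = β <;>
      simp [h1, h2, Set.mem_setOf_eq]
  rw [Finset.sum_congr rfl fun α' _ => Finset.sum_congr rfl fun β' _ => h α' β']
  have h2 : ∀ α' : U a,
      ∑ β', (if α' = α then (if β' = β then P.val a b α' β' else 0) else 0) =
        if α' = α then P.val a b α' β else 0 := by
    intro α'
    by_cases h1 : α' = α
    · simp [h1]
    · simp [h1]
  rw [Finset.sum_congr rfl fun α' _ => h2 α']
  simp

end Box

end Aux


theorem statement5 {N M : ℕ} (hN : 0 < N) (hM : 0 < M)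
    (U : Fin N → Type) (V : Fin M → Type)
    [∀ a, Fintype (U a)] [∀ b, Fintype (V b)]
    (hU : ∀ a, 2 ≤ Fintype.card (U a)) (hV : ∀ b, 2 ≤ Fintype.card (V b))
    (P : Box.PRState U V) :
    ∃ ρ : Box.State U V,
      (∀ (a : Fin N) (b : Fin M) (α : U a) (β : V b),
        ρ.val (Box.atom a α b β) = P.val a b α β) ∧
      ∀ ρ' : Box.State U V,
        (∀ (a : Fin N) (b : Fin M) (α : U a) (β : V b),
          ρ'.val (Box.atom a α b β) = P.val a b α β) →
        ∀ s, Box.Logic U V s → ρ'.val s = ρ.val s := by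
  have hU' : ∀ i, Nonempty (U i) := fun i =>
    Fintype.card_pos_iff.1 (lt_of_lt_of_le two_pos (hU i))
  have hV' : ∀ j, Nonempty (V j) := fun j =>
    Fintype.card_pos_iff.1 (lt_of_lt_of_le two_pos (hV j))
  refine ⟨{ val := Box.rho P
            nonneg := fun s hs =>
              Box.rho_nonneg_inC P hU' hV' (Box.logic_inC P hN hM hU' hV' hs)
            le_one := fun s hs =>
              Box.rho_le_one_inC P hN hM hU' hV' (Box.logic_inC P hN hM hU' hV' hs)
            normalized := Box.rho_univ P hN hM hU' hV'
            additive := fun n f hf hd _ =>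
              (Box.rho_iUnion P hN hM hU' hV' n f
                (fun i => Box.logic_inC P hN hM hU' hV' (hf i)) hd).2 },
    fun a b α β => Box.rho_atom P hU' hV' a α b β, ?_⟩
  intro ρ' hatom s hs
  have hempty : ∀ σ : Box.State U V, σ.val ∅ = 0 := by
    intro σ
    have hlog : Box.Logic U V (⋃ i : Fin 0, (fun i => i.elim0 : Fin 0 → _) i) := by
      rw [Set.iUnion_of_empty]; exact Box.Logic.empty
    have h := σ.additive 0 (fun i => i.elim0) (fun i => i.elim0) (fun i => i.elim0) hlog
    rw [Set.iUnion_of_empty] at h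
    simpa using h
  have hcompl : ∀ (σ : Box.State U V) t, Box.Logic U V t → σ.val tᶜ = 1 - σ.val t := by
    intro σ t ht
    have hunion : (⋃ i, (![t, tᶜ] : Fin 2 → _) i) = Set.univ := by
      ext z
      simp [Set.mem_iUnion, Fin.exists_fin_two, or_comm, Classical.em]
    have hlog : ∀ i : Fin 2, Box.Logic U V (![t, tᶜ] i) := by
      intro i; fin_cases i
      · exact ht
      · exact Box.Logic.compl t ht
    have hdisj : ∀ i j : Fin 2, i ≠ j → Disjoint (![t, tᶜ] i) (![t, tᶜ] j) := by
      intro i j hij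
      fin_cases i <;> fin_cases j <;>
        simp_all [disjoint_compl_right, disjoint_compl_left]
    have hlogu : Box.Logic U V (⋃ i, (![t, tᶜ] : Fin 2 → _) i) := by
      rw [hunion, ← Set.compl_empty]
      exact Box.Logic.compl ∅ Box.Logic.empty
    have h := σ.additive 2 ![t, tᶜ] hlog hdisj hlogu
    rw [hunion, σ.normalized, Fin.sum_univ_two] at h
    have h0 : (![t, tᶜ] : Fin 2 → _) 0 = t := rfl
    have h1 : (![t, tᶜ] : Fin 2 → _) 1 = tᶜ := rfl
    rw [h0, h1] at h
    linarith
  induction hs with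
  | empty => rw [hempty ρ']; exact (hempty _).symm
  | atom a α b β =>
    rw [hatom a b α β]
    exact (Box.rho_atom P hU' hV' a α b β).symm
  | compl t ht ih => rw [hcompl ρ' t ht, hcompl _ t ht, ih]
  | iUnion n f hf hd ih =>
    have hlogu := Box.Logic.iUnion n f hf hd
    rw [ρ'.additive n f hf hd hlogu, Box.State.additive _ n f hf hd hlogu]
    exact Finset.sum_congr rfl fun i _ => ih i
end

section
/- For every state ρ on ℒ, the function P_ρ defined by P_ρ(αβ|ab) := ρ([aα,bβ]) is a PR-state; that is, it is nonnegative, satisfies Σ_{α∈U_a, β∈V_b} P_ρ(αβ|ab) = 1 for all inputs a, b, and satisfies both non-signalling conditions. -/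
namespace Box

variable {N M : ℕ} {U : Fin N → Type} {V : Fin M → Type}

lemma logic_iUnion_fintype {ι : Type} [Fintype ι]
    (f : ι → Set ((∀ i, U i) × (∀ j, V j))) (hf : ∀ i, Logic U V (f i))
    (hd : ∀ i j, i ≠ j → Disjoint (f i) (f j)) : Logic U V (⋃ i, f i) := by
  let e := (Fintype.equivFin ι).symm
  have h : (⋃ i, f i) = ⋃ k, f (e k) := by
    ext x
    simp only [Set.mem_iUnion]
    exact ⟨fun ⟨i, h⟩ => ⟨e.symm i, by simpa using h⟩, fun ⟨k, h⟩ => ⟨e k, h⟩⟩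
  rw [h]
  exact Logic.iUnion _ _ (fun k => hf _)
    (fun i j hij => hd _ _ (fun he => hij (e.injective he)))

lemma state_sum {ι : Type} [Fintype ι] (ρ : State U V)
    (f : ι → Set ((∀ i, U i) × (∀ j, V j))) (hf : ∀ i, Logic U V (f i))
    (hd : ∀ i j, i ≠ j → Disjoint (f i) (f j)) :
    ρ.val (⋃ i, f i) = ∑ i, ρ.val (f i) := by
  let e := (Fintype.equivFin ι).symm
  have h : (⋃ i, f i) = ⋃ k, f (e k) := by
    ext x
    simp only [Set.mem_iUnion]
    exact ⟨fun ⟨i, h⟩ => ⟨e.symm i, by simpa using h⟩, fun ⟨k, h⟩ => ⟨e k, h⟩⟩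
  rw [h, ρ.additive _ _ (fun k => hf _)
    (fun i j hij => hd _ _ (fun he => hij (e.injective he)))
    (logic_iUnion_fintype _ (fun k => hf _)
      (fun i j hij => hd _ _ (fun he => hij (e.injective he))))]
  exact (Fintype.sum_equiv e.symm _ _ (fun i => by simp [e])).symm

lemma atom_disjoint (a : Fin N) (b : Fin M) :
    ∀ (x y : U a × V b), x ≠ y →
      Disjoint (atom a x.1 b x.2) (atom a y.1 b y.2) := by
  rintro ⟨α, β⟩ ⟨α', β'⟩ hxy
  refine Set.disjoint_left.2 ?_
  rintro ⟨p, q⟩ ⟨h1, h2⟩ ⟨h3, h4⟩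
  exact hxy (Prod.ext (h1.symm.trans h3) (h2.symm.trans h4))

end Box

theorem statement6 {N M : ℕ} (hN : 0 < N) (hM : 0 < M)
    (U : Fin N → Type) (V : Fin M → Type)
    [∀ a, Fintype (U a)] [∀ b, Fintype (V b)]
    (hU : ∀ a, 2 ≤ Fintype.card (U a)) (hV : ∀ b, 2 ≤ Fintype.card (V b))
    (ρ : Box.State U V) :
    (∀ (a : Fin N) (b : Fin M) (α : U a) (β : V b),
      0 ≤ ρ.val (Box.atom a α b β)) ∧
    (∀ (a : Fin N) (b : Fin M),
      ∑ α : U a, ∑ β : V b, ρ.val (Box.atom a α b β) = 1) ∧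
    (∀ (a c : Fin N) (b : Fin M) (β : V b),
      ∑ α : U a, ρ.val (Box.atom a α b β) =
      ∑ α : U c, ρ.val (Box.atom c α b β)) ∧
    (∀ (a : Fin N) (b c : Fin M) (α : U a),
      ∑ β : V b, ρ.val (Box.atom a α b β) =
      ∑ β : V c, ρ.val (Box.atom a α c β)) := by

  refine ⟨fun a b α β => ρ.nonneg _ (Box.Logic.atom a α b β), ?_, ?_, ?_⟩
  · intro a b
    have hu : (⋃ x : U a × V b, Box.atom a x.1 b x.2) = Set.univ := by
      ext ⟨p, q⟩
      simp only [Set.mem_iUnion, Set.mem_univ, iff_true]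
      exact ⟨(p a, q b), rfl, rfl⟩
    have := Box.state_sum ρ (fun x : U a × V b => Box.atom a x.1 b x.2)
      (fun x => Box.Logic.atom a x.1 b x.2) (Box.atom_disjoint a b)
    rw [hu, ρ.normalized, Fintype.sum_prod_type] at this
    exact this.symm
  · intro a c b β
    have key : ∀ a : Fin N, ∑ α : U a, ρ.val (Box.atom a α b β) =
        ρ.val {p : (∀ i, U i) × (∀ j, V j) | p.2 b = β} := by
      intro a
      have hu : (⋃ α : U a, Box.atom a α b β) =
          {p : (∀ i, U i) × (∀ j, V j) | p.2 b = β} := by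
        ext ⟨p, q⟩
        simp only [Set.mem_iUnion, Box.atom, Set.mem_setOf_eq]
        exact ⟨fun ⟨α, _, h⟩ => h, fun h => ⟨p a, rfl, h⟩⟩
      have hd : ∀ (α α' : U a), α ≠ α' →
          Disjoint (Box.atom a α b β) (Box.atom a α' b β) := by
        intro α α' h
        refine Set.disjoint_left.2 ?_
        rintro ⟨p, q⟩ ⟨h1, -⟩ ⟨h3, -⟩
        exact h (h1 ▸ h3 ▸ rfl)
      have := Box.state_sum ρ (fun α : U a => Box.atom a α b β)
        (fun α => Box.Logic.atom a α b β) hd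
      rw [hu] at this
      exact this.symm
    rw [key a, key c]
  · intro a b c α
    have key : ∀ b : Fin M, ∑ β : V b, ρ.val (Box.atom a α b β) =
        ρ.val {p : (∀ i, U i) × (∀ j, V j) | p.1 a = α} := by
      intro b
      have hu : (⋃ β : V b, Box.atom a α b β) =
          {p : (∀ i, U i) × (∀ j, V j) | p.1 a = α} := by
        ext ⟨p, q⟩
        simp only [Set.mem_iUnion, Box.atom, Set.mem_setOf_eq]
        exact ⟨fun ⟨β, h, _⟩ => h, fun h => ⟨q b, h, rfl⟩⟩
      have hd : ∀ (β β' : V b), β ≠ β' →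
          Disjoint (Box.atom a α b β) (Box.atom a α b β') := by
        intro β β' h
        refine Set.disjoint_left.2 ?_
        rintro ⟨p, q⟩ ⟨-, h2⟩ ⟨-, h4⟩
        exact h (h2 ▸ h4 ▸ rfl)
      have := Box.state_sum ρ (fun β : V b => Box.atom a α b β)
        (fun β => Box.Logic.atom a α b β) hd
      rw [hu] at this
      exact this.symm
    rw [key b, key c]
end

section
/- For any input a, any subset P ⊆ U_a, any input b and any subset Q ⊆ V_b, the elements [a∈P,𝟙] and [𝟙,b∈Q] of ℒ are compatible: there exist pairwise disjoint p₁, q₁, r ∈ ℒ with [a∈P,𝟙] = p₁ ∪ r and [𝟙,b∈Q] = q₁ ∪ r. -/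
namespace Box

variable {N M : ℕ}

/-- Any "rectangle" `{p | p.1 a ∈ P ∧ p.2 b ∈ Q}` is in `ℒ`. -/
lemma logic_rect (U : Fin N → Type) (V : Fin M → Type)
    [∀ a, Fintype (U a)] [∀ b, Fintype (V b)]
    (a : Fin N) (P : Set (U a)) (b : Fin M) (Q : Set (V b)) :
    Logic U V {p : (∀ i, U i) × (∀ j, V j) | p.1 a ∈ P ∧ p.2 b ∈ Q} := by
  classical
  set s : Type := {x : U a × V b // x.1 ∈ P ∧ x.2 ∈ Q}
  letI : Fintype s := Fintype.ofFinite s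
  let e := (Fintype.equivFin s).symm
  have key : {p : (∀ i, U i) × (∀ j, V j) | p.1 a ∈ P ∧ p.2 b ∈ Q} =
      ⋃ i, Box.atom a (e i).1.1 b (e i).1.2 := by
    ext p
    simp only [Set.mem_setOf_eq, Set.mem_iUnion, Box.atom]
    constructor
    · rintro ⟨hP, hQ⟩
      exact ⟨e.symm ⟨(p.1 a, p.2 b), hP, hQ⟩, by simp⟩
    · rintro ⟨i, h1, h2⟩
      exact ⟨h1 ▸ (e i).2.1, h2 ▸ (e i).2.2⟩
  rw [key]
  refine Logic.iUnion _ _ (fun i => Logic.atom _ _ _ _) (fun i j hij => ?_)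
  rw [Set.disjoint_left]
  rintro p ⟨h1, h2⟩ ⟨h3, h4⟩
  exact hij (e.injective (Subtype.ext (Prod.ext (h1.symm.trans h3) (h2.symm.trans h4))))

end Box

theorem statement7 {N M : ℕ} (hN : 0 < N) (hM : 0 < M)
    (U : Fin N → Type) (V : Fin M → Type)
    [∀ a, Fintype (U a)] [∀ b, Fintype (V b)]
    (hU : ∀ a, 2 ≤ Fintype.card (U a)) (hV : ∀ b, 2 ≤ Fintype.card (V b))
    (a : Fin N) (P : Set (U a)) (b : Fin M) (Q : Set (V b)) :
    ∃ p₁ q₁ r, Box.Logic U V p₁ ∧ Box.Logic U V q₁ ∧ Box.Logic U V r ∧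
      Disjoint p₁ q₁ ∧ Disjoint p₁ r ∧ Disjoint q₁ r ∧
      Box.locL U V a P = p₁ ∪ r ∧ Box.locR U V b Q = q₁ ∪ r := by
  classical
  refine ⟨{p | p.1 a ∈ P ∧ p.2 b ∈ Qᶜ}, {p | p.1 a ∈ Pᶜ ∧ p.2 b ∈ Q},
    {p | p.1 a ∈ P ∧ p.2 b ∈ Q},
    Box.logic_rect U V a P b Qᶜ, Box.logic_rect U V a Pᶜ b Q,
    Box.logic_rect U V a P b Q, ?_, ?_, ?_, ?_, ?_⟩
  · rw [Set.disjoint_left]; rintro p ⟨h1, _⟩ ⟨h2, _⟩; exact h2 h1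
  · rw [Set.disjoint_left]; rintro p ⟨_, h1⟩ ⟨_, h2⟩; exact h1 h2
  · rw [Set.disjoint_left]; rintro p ⟨h1, _⟩ ⟨h2, _⟩; exact h1 h2
  · ext p
    simp only [Box.locL, Set.mem_setOf_eq, Set.mem_union, Set.mem_compl_iff]
    constructor
    · intro h; by_cases hq : p.2 b ∈ Q
      · exact Or.inr ⟨h, hq⟩
      · exact Or.inl ⟨h, hq⟩
    · rintro (⟨h, _⟩ | ⟨h, _⟩) <;> exact h
  · ext p
    simp only [Box.locR, Set.mem_setOf_eq, Set.mem_union, Set.mem_compl_iff]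
    constructor
    · intro h; by_cases hp : p.1 a ∈ P
      · exact Or.inr ⟨hp, h⟩
      · exact Or.inl ⟨hp, h⟩
    · rintro (⟨_, h⟩ | ⟨_, h⟩) <;> exact h
end

section
/- Let a ≠ a' be two left-box inputs, let P be a proper subset of U_a and Q a proper subset of U_{a'}. Then the only element r ∈ ℒ with r ⊆ [a∈P,𝟙] ∩ [a'∈Q,𝟙] is the empty set; in particular the greatest lower bound of [a∈P,𝟙] and [a'∈Q,𝟙] in (ℒ, ⊆) exists and equals ∅. -/
open Classical in
/-- Indicator function with values in `ℤ`. -/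
noncomputable def boxChi {γ : Type*} (s : Set γ) (p : γ) : ℤ := if p ∈ s then 1 else 0

lemma boxChi_compl {γ : Type*} (s : Set γ) (p : γ) : boxChi sᶜ p = 1 - boxChi s p := by
  classical
  by_cases h : p ∈ s <;> simp [boxChi, h]

lemma boxChi_nonneg {γ : Type*} (s : Set γ) (p : γ) : 0 ≤ boxChi s p := by
  classical
  by_cases h : p ∈ s <;> simp [boxChi, h]

lemma boxChi_of_mem {γ : Type*} {s : Set γ} {p : γ} (h : p ∈ s) : boxChi s p = 1 := by
  simp [boxChi, h]

lemma boxChi_of_notMem {γ : Type*} {s : Set γ} {p : γ} (h : p ∉ s) : boxChi s p = 0 := by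
  simp [boxChi, h]

lemma boxChi_iUnion {γ : Type*} {n : ℕ} (f : Fin n → Set γ)
    (hd : ∀ i j, i ≠ j → Disjoint (f i) (f j)) (p : γ) :
    boxChi (⋃ i, f i) p = ∑ i, boxChi (f i) p := by
  classical
  by_cases h : p ∈ ⋃ i, f i
  · obtain ⟨i, hi⟩ := Set.mem_iUnion.1 h
    rw [boxChi_of_mem h, Finset.sum_eq_single i]
    · rw [boxChi_of_mem hi]
    · intro j _ hj
      exact boxChi_of_notMem fun hpj => Set.disjoint_left.1 (hd j i hj) hpj hi
    · intro hni; exact absurd (Finset.mem_univ i) hni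
  · rw [boxChi_of_notMem h, eq_comm]
    exact Finset.sum_eq_zero fun i _ =>
      boxChi_of_notMem fun hi => h (Set.mem_iUnion.2 ⟨i, hi⟩)

/-- The interference functional vanishes on every element of `ℒ`. -/
lemma box_key {N M : ℕ} (U : Fin N → Type) (V : Fin M → Type)
    [∀ b, Fintype (V b)]
    (a a' : Fin N) (haa : a ≠ a') (α0 : U a) (α0' : U a')
    (x : ∀ i, U i) (s : Set ((∀ i, U i) × (∀ j, V j))) (hs : Box.Logic U V s) :
    ∑ y : (∀ j, V j),
      (boxChi s (x, y)
       - boxChi s (Function.update x a α0, y)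
       - boxChi s (Function.update x a' α0', y)
       + boxChi s (Function.update (Function.update x a α0) a' α0', y)) = 0 := by
  classical
  induction hs with
  | empty => simp [boxChi]
  | atom c γ b β =>
    refine Finset.sum_eq_zero fun y _ => ?_
    by_cases hc : c = a
    · subst hc
      have hca' : c ≠ a' := haa
      simp only [Box.atom, boxChi, Set.mem_setOf_eq,
        Function.update_self, Function.update_of_ne hca']
      by_cases h1 : x c = γ <;> by_cases h2 : α0 = γ <;> by_cases h3 : y b = β <;>
        simp [h1, h2, h3]
    · by_cases hc' : c = a'
      · subst hc'
        have hca : c ≠ a := hc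
        simp only [Box.atom, boxChi, Set.mem_setOf_eq,
          Function.update_self, Function.update_of_ne hca]
        by_cases h1 : x c = γ <;> by_cases h2 : α0' = γ <;> by_cases h3 : y b = β <;>
          simp [h1, h2, h3]
      · simp only [Box.atom, boxChi, Set.mem_setOf_eq,
          Function.update_of_ne hc, Function.update_of_ne hc']
        ring
  | compl s hs ih =>
    have h1 : ∀ y : (∀ j, V j),
        (boxChi sᶜ (x, y)
         - boxChi sᶜ (Function.update x a α0, y)
         - boxChi sᶜ (Function.update x a' α0', y)
         + boxChi sᶜ (Function.update (Function.update x a α0) a' α0', y))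
        = -(boxChi s (x, y)
         - boxChi s (Function.update x a α0, y)
         - boxChi s (Function.update x a' α0', y)
         + boxChi s (Function.update (Function.update x a α0) a' α0', y)) := by
      intro y; simp only [boxChi_compl]; ring
    rw [Finset.sum_congr rfl fun y _ => h1 y, Finset.sum_neg_distrib, ih, neg_zero]
  | iUnion n f hf hd ih =>
    have h1 : ∀ y : (∀ j, V j),
        (boxChi (⋃ i, f i) (x, y)
         - boxChi (⋃ i, f i) (Function.update x a α0, y)
         - boxChi (⋃ i, f i) (Function.update x a' α0', y)
         + boxChi (⋃ i, f i) (Function.update (Function.update x a α0) a' α0', y))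
        = ∑ i, (boxChi (f i) (x, y)
         - boxChi (f i) (Function.update x a α0, y)
         - boxChi (f i) (Function.update x a' α0', y)
         + boxChi (f i) (Function.update (Function.update x a α0) a' α0', y)) := by
      intro y
      rw [boxChi_iUnion f hd, boxChi_iUnion f hd, boxChi_iUnion f hd, boxChi_iUnion f hd,
        ← Finset.sum_sub_distrib, ← Finset.sum_sub_distrib, ← Finset.sum_add_distrib]
    rw [Finset.sum_congr rfl fun y _ => h1 y, Finset.sum_comm]
    exact Finset.sum_eq_zero fun i _ => ih i


theorem statement8 {N M : ℕ} (hN : 0 < N) (hM : 0 < M)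
    (U : Fin N → Type) (V : Fin M → Type)
    [∀ a, Fintype (U a)] [∀ b, Fintype (V b)]
    (hU : ∀ a, 2 ≤ Fintype.card (U a)) (hV : ∀ b, 2 ≤ Fintype.card (V b))
    (a a' : Fin N) (haa : a ≠ a')
    (P : Set (U a)) (Q : Set (U a'))
    (hP : P ≠ Set.univ) (hQ : Q ≠ Set.univ) :
    (∀ r, Box.Logic U V r →
      r ⊆ Box.locL U V a P ∩ Box.locL U V a' Q → r = ∅) ∧
    ∃ g, Box.Logic U V g ∧ g ⊆ Box.locL U V a P ∧ g ⊆ Box.locL U V a' Q ∧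
      (∀ r, Box.Logic U V r → r ⊆ Box.locL U V a P →
        r ⊆ Box.locL U V a' Q → r ⊆ g) ∧
      g = ∅ := by
  classical
  obtain ⟨α0, hα0⟩ := (Set.ne_univ_iff_exists_notMem P).1 hP
  obtain ⟨α0', hα0'⟩ := (Set.ne_univ_iff_exists_notMem Q).1 hQ
  have key : ∀ r, Box.Logic U V r →
      r ⊆ Box.locL U V a P ∩ Box.locL U V a' Q → r = ∅ := by
    intro r hr hsub
    by_contra hne
    obtain ⟨⟨x, y0⟩, hp⟩ := Set.nonempty_iff_ne_empty.2 hne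
    have h0 := box_key U V a a' haa α0 α0' x r hr
    have hB : ∀ y : (∀ j, V j), boxChi r (Function.update x a α0, y) = 0 := by
      intro y
      refine boxChi_of_notMem fun hmem => hα0 ?_
      have := (hsub hmem).1
      simpa [Box.locL, Function.update_self] using this
    have hC : ∀ y : (∀ j, V j), boxChi r (Function.update x a' α0', y) = 0 := by
      intro y
      refine boxChi_of_notMem fun hmem => hα0' ?_
      have := (hsub hmem).2
      simpa [Box.locL, Function.update_self] using this
    have hD : ∀ y : (∀ j, V j),
        boxChi r (Function.update (Function.update x a α0) a' α0', y) = 0 := by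
      intro y
      refine boxChi_of_notMem fun hmem => hα0 ?_
      have := (hsub hmem).1
      simpa [Box.locL, Function.update_of_ne haa, Function.update_self] using this
    have h0' : ∑ y : (∀ j, V j), boxChi r (x, y) = 0 := by
      rw [← h0]
      refine Finset.sum_congr rfl fun y _ => ?_
      rw [hB y, hC y, hD y]; ring
    have hzero := (Finset.sum_eq_zero_iff_of_nonneg
      (fun y _ => boxChi_nonneg r (x, y))).1 h0' y0 (Finset.mem_univ y0)
    rw [boxChi_of_mem hp] at hzero
    exact one_ne_zero hzero
  refine ⟨key, ∅, Box.Logic.empty, by simp, by simp, ?_, rfl⟩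
  intro r hr h1 h2
  rw [key r hr (Set.subset_inter h1 h2)]
end

section
/- Let a ≠ a' be two left-box inputs, let P ⊆ U_a and Q ⊆ U_{a'} be nonempty. Then the only element r ∈ ℒ with [a∈P,𝟙] ∪ [a'∈Q,𝟙] ⊆ r is Γ itself; in particular the least upper bound of [a∈P,𝟙] and [a'∈Q,𝟙] in (ℒ, ⊆) exists and equals Γ. -/
namespace Box

/-- `A` depends only on coordinate `c`. -/
def OneCoord {N : ℕ} {U : Fin N → Type} (c : Fin N) (A : Set (∀ i, U i)) : Prop :=
  ∀ x x' : ∀ i, U i, x c = x' c → x ∈ A → x' ∈ A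

lemma logic_section {N M : ℕ} {U : Fin N → Type} {V : Fin M → Type}
    (c₀ : Fin N) {s : Set ((∀ i, U i) × (∀ j, V j))} (hs : Logic U V s)
    (y : ∀ j, V j) : ∃ c : Fin N, OneCoord c {x | (x, y) ∈ s} := by
  induction hs with
  | empty => exact ⟨c₀, fun x x' _ h => h.elim⟩
  | atom a α b β =>
      exact ⟨a, fun x x' hxx h => ⟨hxx.symm.trans h.1, h.2⟩⟩
  | compl s hs ih =>
      obtain ⟨c, hc⟩ := ih
      exact ⟨c, fun x x' hxx h h' => h (hc x' x hxx.symm h')⟩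
  | iUnion n f hf hd ih =>
      choose c hc using ih
      by_cases hne : ∃ i₀ : Fin n, ∃ x₀ : ∀ i, U i, (x₀, y) ∈ f i₀
      · obtain ⟨i₀, x₀, hx₀⟩ := hne
        refine ⟨c i₀, fun x x' hxx hx => ?_⟩
        simp only [Set.mem_setOf_eq, Set.mem_iUnion] at hx ⊢
        obtain ⟨i, hi⟩ := hx
        rcases eq_or_ne i i₀ with rfl | hii
        · exact ⟨i, hc i x x' hxx hi⟩
        · have hcc : c i = c i₀ := by
            by_contra hcc
            set w : ∀ i, U i := Function.update x₀ (c i) (x (c i)) with hw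
            have hw1 : (w, y) ∈ f i := by
              refine hc i x w ?_ hi
              simp [hw]
            have hw2 : (w, y) ∈ f i₀ := by
              refine hc i₀ x₀ w ?_ hx₀
              simp [hw, Function.update_of_ne (Ne.symm hcc)]
            exact (hd i i₀ hii).le_bot ⟨hw1, hw2⟩ |>.elim
          refine ⟨i, hc i x x' ?_ hi⟩
          rw [hcc]; exact hxx
      · push_neg at hne
        refine ⟨c₀, fun x x' _ hx => ?_⟩
        simp only [Set.mem_setOf_eq, Set.mem_iUnion] at hx
        obtain ⟨i, hi⟩ := hx
        exact absurd hi (hne i x)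

end Box

theorem statement9 {N M : ℕ} (hN : 0 < N) (hM : 0 < M)
    (U : Fin N → Type) (V : Fin M → Type)
    [∀ a, Fintype (U a)] [∀ b, Fintype (V b)]
    (hU : ∀ a, 2 ≤ Fintype.card (U a)) (hV : ∀ b, 2 ≤ Fintype.card (V b))
    (a a' : Fin N) (haa : a ≠ a')
    (P : Set (U a)) (Q : Set (U a'))
    (hP : P.Nonempty) (hQ : Q.Nonempty) :
    (∀ r, Box.Logic U V r →
      Box.locL U V a P ∪ Box.locL U V a' Q ⊆ r → r = Set.univ) ∧
    ∃ g, Box.Logic U V g ∧ Box.locL U V a P ⊆ g ∧ Box.locL U V a' Q ⊆ g ∧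
      (∀ r, Box.Logic U V r → Box.locL U V a P ⊆ r →
        Box.locL U V a' Q ⊆ r → g ⊆ r) ∧
      g = Set.univ := by
  have key : ∀ r, Box.Logic U V r →
      Box.locL U V a P ∪ Box.locL U V a' Q ⊆ r → r = Set.univ := by
    intro r hr hsub
    rw [Set.eq_univ_iff_forall]
    rintro ⟨x, y⟩
    obtain ⟨c, hc⟩ := Box.logic_section a hr y
    by_cases h : c = a
    · subst h
      obtain ⟨q, hq⟩ := hQ
      set x' : ∀ i, U i := Function.update x a' q with hx'
      have hmem : (x', y) ∈ r := hsub (Or.inr (by simp [Box.locL, hx', hq]))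
      refine hc x' x ?_ hmem
      simp [hx', Function.update_of_ne haa]
    · obtain ⟨p, hp⟩ := hP
      set x' : ∀ i, U i := Function.update x a p with hx'
      have hmem : (x', y) ∈ r := hsub (Or.inl (by simp [Box.locL, hx', hp]))
      refine hc x' x ?_ hmem
      simp [hx', Function.update_of_ne h]
  refine ⟨key, Set.univ, ?_, Set.subset_univ _, Set.subset_univ _,
    fun r hr h1 h2 => ?_, rfl⟩
  · have : Box.Logic U V (∅ : Set ((∀ i, U i) × (∀ j, V j)))ᶜ :=
      Box.Logic.compl _ Box.Logic.empty
    simpa using this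
  · rw [key r hr (Set.union_subset h1 h2)]
end

section
/- For every left-box input a and every subset P ⊆ U_a the set [a∈P,𝟙] belongs to ℒ; moreover, for any P, Q ⊆ U_a, the greatest lower bound of [a∈P,𝟙] and [a∈Q,𝟙] in (ℒ, ⊆) exists and equals [a∈P∩Q,𝟙], and their least upper bound in (ℒ, ⊆) exists and equals [a∈P∪Q,𝟙]. -/
theorem statement10 {N M : ℕ} (hN : 0 < N) (hM : 0 < M)
    (U : Fin N → Type) (V : Fin M → Type)
    [∀ a, Fintype (U a)] [∀ b, Fintype (V b)]
    (hU : ∀ a, 2 ≤ Fintype.card (U a)) (hV : ∀ b, 2 ≤ Fintype.card (V b))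
    (a : Fin N) :
    (∀ P : Set (U a), Box.Logic U V (Box.locL U V a P)) ∧
    ∀ P Q : Set (U a),
      (Box.locL U V a (P ∩ Q) ⊆ Box.locL U V a P ∧
       Box.locL U V a (P ∩ Q) ⊆ Box.locL U V a Q ∧
       ∀ r, Box.Logic U V r → r ⊆ Box.locL U V a P → r ⊆ Box.locL U V a Q →
         r ⊆ Box.locL U V a (P ∩ Q)) ∧
      (Box.locL U V a P ⊆ Box.locL U V a (P ∪ Q) ∧
       Box.locL U V a Q ⊆ Box.locL U V a (P ∪ Q) ∧
       ∀ r, Box.Logic U V r → Box.locL U V a P ⊆ r → Box.locL U V a Q ⊆ r →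
         Box.locL U V a (P ∪ Q) ⊆ r) := by
  classical
  have key : ∀ P : Set (U a), Box.Logic U V (Box.locL U V a P) := by
    intro P
    set b : Fin M := ⟨0, hM⟩ with hb
    let e := (Fintype.equivFin (P × V b)).symm
    have heq : Box.locL U V a P = ⋃ i, Box.atom a ((e i).1 : U a) b (e i).2 := by
      ext ⟨x, y⟩
      simp only [Box.locL, Box.atom, Set.mem_setOf_eq, Set.mem_iUnion]
      constructor
      · intro hx
        refine ⟨e.symm ⟨⟨x a, hx⟩, y b⟩, ?_⟩
        simp [e]
      · rintro ⟨i, h1, h2⟩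
        rw [h1]; exact (e i).1.2
    rw [heq]
    refine Box.Logic.iUnion _ _ (fun i => Box.Logic.atom _ _ _ _) ?_
    intro i j hij
    rw [Set.disjoint_left]
    rintro ⟨x, y⟩ ⟨h1, h2⟩ ⟨h3, h4⟩
    exact hij (e.injective (Prod.ext (Subtype.ext (h1.symm.trans h3)) (h2.symm.trans h4)))
  exact ⟨key, fun P Q => ⟨⟨fun p hp => hp.1, fun p hp => hp.2,
    fun r _ h1 h2 p hp => ⟨h1 hp, h2 hp⟩⟩,
    ⟨fun p hp => Or.inl hp, fun p hp => Or.inr hp,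
    fun r _ h1 h2 p hp => hp.elim (fun h => h1 h) (fun h => h2 h)⟩⟩⟩
end
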